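/- arXiv:2002.08116 — 6 statements merged into one kernel-verified Lean document; each statement's English description precedes it below -/
import Mathlib

section
/- Let h ∈ H₊ and P a polynomial such that the function x ↦ P(x)h(x) belongs to L²(ℝ). Then Ph ∈ H₊. -/
open MeasureTheory Complex Real Set FourierTransform
open scoped ENNReal ComplexConjugate

noncomputable section

abbrev L2R : Type := Lp ℂ 2 (volume : Measure ℝ)

/-- `U` is the Fourier–Plancherel transform: the unitary operator on `L²(ℝ)` that agrees
with the Fourier integral on integrable square-integrable functions. -/
def IsFourierL2 (U : L2R ≃ₗᵢ[ℂ] L2R) : Prop :=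
  ∀ (f : ℝ → ℂ) (_ : MeasureTheory.Integrable f) (hf2 : MeasureTheory.MemLp f 2 volume),
    U (hf2.toLp f) =ᵐ[volume] 𝓕 f

/-- Membership in the Hardy space `H₊`: the Fourier transform vanishes a.e. on `(-∞, 0)`. -/
def InHardy (U : L2R ≃ₗᵢ[ℂ] L2R) (f : L2R) : Prop :=
  ∀ᵐ x : ℝ, x < 0 → (U f : ℝ → ℂ) x = 0

/-!
Multiplication by `𝐞 (t x)` with `t ≥ 0` translates the Fourier transform to the right, so it
preserves `H₊`; this is checked on integrable functions, where `U` is the Fourier integral, and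
extends to `L²` by density. Hence the difference quotients `(𝐞 (t x) - 1) h(x) / (2π i t)` lie in
`H₊`, and when `x h ∈ L²` they converge to `x h` in `L²` as `t → 0⁺`, by dominated convergence.
As `H₊` is a closed subspace, `x h ∈ H₊`. For a polynomial, write `P = c ∏ (X - a)` over its
roots: if `(X - a) Q h ∈ L²` then `Q h ∈ L²`, because `|x - a| ≥ 1` off a compact set, and
`(X - a) Q h = x (Q h) - a (Q h)`; induction on the roots concludes.
-/

open Filter Topology

section Lp

variable {α E : Type*} [MeasurableSpace α] {μ : Measure α} [NormedAddCommGroup E] {p : ℝ≥0∞}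

theorem tendsto_eLpNorm_of_dominated {ι : Type*} {l : Filter ι} [l.IsCountablyGenerated]
    {F : ι → α → E} {b : α → ℝ} (hp : p ≠ ∞) (hF : ∀ᶠ i in l, AEStronglyMeasurable (F i) μ)
    (hb : MemLp b p μ) (h_bound : ∀ᶠ i in l, ∀ᵐ x ∂μ, ‖F i x‖ ≤ b x)
    (h_lim : ∀ᵐ x ∂μ, Tendsto (F · x) l (𝓝 0)) :
    Tendsto (fun i => eLpNorm (F i) p μ) l (𝓝 0) := by
  rcases eq_or_ne p 0 with rfl | hp0
  · simpa using tendsto_const_nhds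
  have hq : 0 < p.toReal := ENNReal.toReal_pos hp0 hp
  simp_rw [eLpNorm_eq_lintegral_rpow_enorm_toReal hp0 hp]
  have h_int : Tendsto (fun i => ∫⁻ x, ‖F i x‖ₑ ^ p.toReal ∂μ) l (𝓝 (∫⁻ _, 0 ∂μ)) := by
    refine tendsto_lintegral_filter_of_dominated_convergence' (fun x => ‖b x‖ₑ ^ p.toReal)
      ?_ ?_ ?_ ?_
    · filter_upwards [hF] with i hi using hi.enorm.pow_const _
    · filter_upwards [h_bound] with i hi
      filter_upwards [hi] with x hx
      gcongr
      exact enorm_le_iff_norm_le.2 (hx.trans (Real.le_norm_self _))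
    · exact (lintegral_rpow_enorm_lt_top_of_eLpNorm_lt_top hp0 hp hb.2).ne
    · filter_upwards [h_lim] with x hx
      have := ((ENNReal.continuous_rpow_const (y := p.toReal)).tendsto _).comp
        ((continuous_enorm.tendsto 0).comp hx)
      simpa [Function.comp_def, ENNReal.zero_rpow_of_pos hq] using this
  simpa [ENNReal.zero_rpow_of_pos (inv_pos.2 hq)] using h_int.ennrpow_const (1 / p.toReal)

theorem isClosed_setOf_ae_imp_eq_zero [Fact (1 ≤ p)] (s : Set α) :
    IsClosed {f : Lp E p μ | ∀ᵐ x ∂μ, x ∈ s → f x = 0} := by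
  refine IsSeqClosed.isClosed fun f g hf hfg => ?_
  obtain ⟨ns, -, hns⟩ := (tendstoInMeasure_of_tendsto_Lp hfg).exists_seq_tendsto_ae
  filter_upwards [hns, ae_all_iff.2 hf] with x hx hfx hxs
  exact tendsto_nhds_unique hx (by simp only [hfx _ hxs, tendsto_const_nhds])

end Lp

def hardySpace (U : L2R ≃ₗᵢ[ℂ] L2R) : Submodule ℂ L2R where
  carrier := {f | InHardy U f}
  zero_mem' := by
    filter_upwards [(map_zero U).symm ▸ Lp.coeFn_zero ℂ 2 volume] with x hx _
    exact hx
  add_mem' {f g} hf hg := by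
    filter_upwards [hf, hg, (map_add U f g).symm ▸ Lp.coeFn_add (U f) (U g)] with x hfx hgx hx hx0
    rw [hx, Pi.add_apply, hfx hx0, hgx hx0, add_zero]
  smul_mem' c f hf := by
    filter_upwards [hf, (map_smul U c f).symm ▸ Lp.coeFn_smul c (U f)] with x hfx hx hx0
    rw [hx, Pi.smul_apply, hfx hx0, smul_zero]

theorem isClosed_hardySpace (U : L2R ≃ₗᵢ[ℂ] L2R) : IsClosed (hardySpace U : Set L2R) :=
  (isClosed_setOf_ae_imp_eq_zero (Iio 0)).preimage U.continuous

def modulate (t : ℝ) (f : ℝ → ℂ) : ℝ → ℂ := fun x => 𝐞 (t * x) * f x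

theorem norm_modulate (t : ℝ) (f : ℝ → ℂ) (x : ℝ) : ‖modulate t f x‖ = ‖f x‖ := by
  simp [modulate, Circle.norm_coe]

theorem modulate_sub (t : ℝ) (f g : ℝ → ℂ) : modulate t (f - g) = modulate t f - modulate t g := by
  ext x; simp [modulate, mul_sub]

section Modulation

variable {μ : Measure ℝ} {f : ℝ → ℂ}

theorem MeasureTheory.AEStronglyMeasurable.modulate (t : ℝ) (hf : AEStronglyMeasurable f μ) :
    AEStronglyMeasurable (modulate t f) μ :=
  (by fun_prop : Continuous fun x : ℝ => (𝐞 (t * x) : ℂ)).aestronglyMeasurable.mul hf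

theorem MeasureTheory.MemLp.modulate {p : ℝ≥0∞} (t : ℝ) (hf : MemLp f p μ) :
    MemLp (modulate t f) p μ :=
  hf.of_le (hf.1.modulate t) (.of_forall fun x => (norm_modulate t f x).le)

theorem MeasureTheory.Integrable.modulate (t : ℝ) (hf : Integrable f μ) :
    Integrable (modulate t f) μ :=
  hf.mono (hf.1.modulate t) (.of_forall fun x => (norm_modulate t f x).le)

end Modulation

theorem fourier_modulate (t : ℝ) (f : ℝ → ℂ) (ξ : ℝ) : 𝓕 (modulate t f) ξ = 𝓕 f (ξ - t) := by
  simp only [Real.fourier_real_eq, modulate, Circle.smul_def, smul_eq_mul, ← mul_assoc,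
    ← Circle.coe_mul, ← AddChar.map_add_eq_mul]
  congr 1 with x
  ring_nf

theorem dist_toLp_modulate (t : ℝ) {f g : ℝ → ℂ} (hf : MemLp f 2 volume) (hg : MemLp g 2 volume) :
    dist ((hf.modulate t).toLp _) ((hg.modulate t).toLp _) = dist (hf.toLp f) (hg.toLp g) := by
  simp only [dist_eq_norm, ← MemLp.toLp_sub, Lp.norm_toLp, ← modulate_sub]
  congr 1
  exact eLpNorm_congr_norm_ae (.of_forall (norm_modulate t _))

def translateL2 (t : ℝ) : L2R →ₗᵢ[ℂ] L2R :=
  Lp.compMeasurePreservingₗᵢ ℂ (· - t) (measurePreserving_sub_right volume t)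

theorem coeFn_translateL2 (t : ℝ) (g : L2R) : translateL2 t g =ᵐ[volume] fun ξ => g (ξ - t) :=
  Lp.coeFn_compMeasurePreserving g _

section Fourier

variable {U : L2R ≃ₗᵢ[ℂ] L2R} {f : ℝ → ℂ}

theorem IsFourierL2.map_modulate_of_integrable (hU : IsFourierL2 U) (t : ℝ) (hi : Integrable f)
    (hf : MemLp f 2 volume) :
    U ((hf.modulate t).toLp _) = translateL2 t (U (hf.toLp f)) := by
  refine Lp.ext ?_
  filter_upwards [hU _ (hi.modulate t) (hf.modulate t), coeFn_translateL2 t (U (hf.toLp f)),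
    (measurePreserving_sub_right volume t).quasiMeasurePreserving.ae_eq (hU f hi hf)]
    with ξ hmod htr hf'
  rw [hmod, htr, fourier_modulate]
  exact hf'.symm

theorem IsFourierL2.map_modulate (hU : IsFourierL2 U) (t : ℝ) (hf : MemLp f 2 volume) :
    U ((hf.modulate t).toLp _) = translateL2 t (U (hf.toLp f)) := by
  refine eq_of_forall_dist_le fun ε hε => ?_
  obtain ⟨g, hg_supp, hfg, hg_cont, hg⟩ := hf.exists_hasCompactSupport_eLpNorm_sub_le
    ENNReal.ofNat_ne_top (ENNReal.ofReal_pos.2 (half_pos hε)).ne'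
  have hdist : dist (hf.toLp f) (hg.toLp g) ≤ ε / 2 := by
    rw [dist_eq_norm, ← MemLp.toLp_sub, Lp.norm_toLp]
    exact ENNReal.toReal_le_of_le_ofReal (half_pos hε).le hfg
  calc dist (U ((hf.modulate t).toLp _)) (translateL2 t (U (hf.toLp f)))
      ≤ dist (U ((hf.modulate t).toLp _)) (U ((hg.modulate t).toLp _))
        + dist (translateL2 t (U (hg.toLp g))) (translateL2 t (U (hf.toLp f))) := by
        rw [hU.map_modulate_of_integrable t (hg_cont.integrable_of_hasCompactSupport hg_supp) hg]
        exact dist_triangle _ _ _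
    _ = dist (hf.toLp f) (hg.toLp g) + dist (hg.toLp g) (hf.toLp f) := by
        rw [U.dist_map, dist_toLp_modulate, LinearIsometry.dist_map, U.dist_map]
    _ ≤ ε := by rw [dist_comm (hg.toLp g)]; linarith

theorem modulate_mem_hardySpace (hU : IsFourierL2 U) {t : ℝ} (ht : 0 ≤ t) (hf : MemLp f 2 volume)
    (hH : hf.toLp f ∈ hardySpace U) : (hf.modulate t).toLp _ ∈ hardySpace U := by
  change InHardy U _
  rw [InHardy, hU.map_modulate t hf]
  filter_upwards [coeFn_translateL2 t (U (hf.toLp f)),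
    (measurePreserving_sub_right volume t).quasiMeasurePreserving.ae hH] with ξ htr hH' hξ
  rw [htr]
  exact hH' (by linarith)

end Fourier

theorem tendsto_fourierChar_slope (x : ℝ) :
    Tendsto (fun t : ℝ => (2 * π * I * t)⁻¹ * ((𝐞 (t * x) : ℂ) - 1)) (𝓝[≠] 0) (𝓝 x) := by
  have hderiv : HasDerivAt (fun t : ℝ => (𝐞 (t * x) : ℂ)) (x • (2 * π * I * 𝐞 (0 * x))) 0 :=
    (Real.hasDerivAt_fourierChar _).scomp (g₁ := fun s : ℝ => (𝐞 s : ℂ)) 0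
      (hasDerivAt_mul_const x)
  have hslope := (hasDerivAt_iff_tendsto_slope.1 hderiv).const_mul (2 * π * I)⁻¹
  have h2πI : (2 * π * I : ℂ) ≠ 0 := by simp [Real.pi_ne_zero, I_ne_zero]
  convert hslope using 2
  · simp only [slope_def_module, sub_zero, zero_mul, AddChar.map_zero_eq_one, Circle.coe_one,
      real_smul, ofReal_inv, mul_inv]
    ring
  · simp only [zero_mul, AddChar.map_zero_eq_one, Circle.coe_one, mul_one, Complex.real_smul]
    field_simp

theorem norm_fourierChar_slope_le (t x : ℝ) :
    ‖(2 * π * I * t)⁻¹ * ((𝐞 (t * x) : ℂ) - 1)‖ ≤ |x| := by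
  rcases eq_or_ne t 0 with rfl | ht
  · simp
  have hchar : ‖(𝐞 (t * x) : ℂ) - 1‖ ≤ 2 * π * |t| * |x| := by
    rw [Real.fourierChar_apply, mul_comm _ I]
    refine norm_exp_I_mul_ofReal_sub_one_le.trans_eq ?_
    simp [abs_of_pos Real.pi_pos, mul_assoc]
  have hnorm : ‖(2 * π * I * t : ℂ)‖ = 2 * π * |t| := by simp [abs_of_pos Real.pi_pos]
  rw [norm_mul, norm_inv, hnorm, inv_mul_le_iff₀ (by positivity)]
  linarith

theorem ofReal_mul_mem_hardySpace {U : L2R ≃ₗᵢ[ℂ] L2R} (hU : IsFourierL2 U) {h : ℝ → ℂ}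
    (hh : MemLp h 2 volume) (hH : hh.toLp h ∈ hardySpace U)
    (hxh : MemLp (fun x : ℝ => (x : ℂ) * h x) 2 volume) : hxh.toLp _ ∈ hardySpace U := by
  set q : ℝ → ℝ → ℂ := fun t x => (2 * π * I * t)⁻¹ * ((𝐞 (t * x) : ℂ) - 1)
  set D : ℝ → ℝ → ℂ := fun t => (2 * π * I * t)⁻¹ • (modulate t h - h)
  have hD : ∀ t, MemLp (D t) 2 volume := fun t => ((hh.modulate t).sub hh).const_smul _
  have hD_apply : ∀ t x, D t x = q t x * h x := fun t x => by
    simp only [D, q, modulate, Pi.smul_apply, Pi.sub_apply, smul_eq_mul]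
    ring
  have hD_mem : ∀ t, 0 ≤ t → (hD t).toLp (D t) ∈ hardySpace U := fun t ht => by
    rw [MemLp.toLp_const_smul _ ((hh.modulate t).sub hh), MemLp.toLp_sub (hh.modulate t) hh]
    exact Submodule.smul_mem _ _ (Submodule.sub_mem _ (modulate_mem_hardySpace hU ht hh hH) hH)
  have hlim : Tendsto (fun t => (hD t).toLp (D t)) (𝓝[>] 0) (𝓝 (hxh.toLp _)) := by
    rw [Lp.tendsto_Lp_iff_tendsto_eLpNorm'']
    refine tendsto_eLpNorm_of_dominated ENNReal.ofNat_ne_top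
      (.of_forall fun t => ((hD t).sub hxh).1) (hxh.norm.const_mul 2)
      (.of_forall fun t => .of_forall fun x => ?_) (.of_forall fun x => ?_)
    · have hq : ‖q t x * h x‖ ≤ ‖(x : ℂ) * h x‖ :=
        calc ‖q t x * h x‖ = ‖q t x‖ * ‖h x‖ := norm_mul _ _
          _ ≤ |x| * ‖h x‖ := by gcongr; exact norm_fourierChar_slope_le t x
          _ = ‖(x : ℂ) * h x‖ := by simp
      simp only [Pi.sub_apply, hD_apply]
      linarith [norm_sub_le (q t x * h x) ((x : ℂ) * h x)]
    · have := (((tendsto_fourierChar_slope x).mono_left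
        (nhdsWithin_mono 0 fun t (ht : 0 < t) => ht.ne')).sub_const (x : ℂ)).mul_const (h x)
      rw [sub_self, zero_mul] at this
      refine this.congr fun t => ?_
      simp only [Pi.sub_apply, hD_apply]
      ring
  exact (isClosed_hardySpace U).mem_of_tendsto hlim
    (eventually_nhdsWithin_of_forall fun t ht => hD_mem t (le_of_lt ht))

open Polynomial

theorem MeasureTheory.MemLp.mul_of_norm_le_off_compact {α : Type*} [TopologicalSpace α]
    [MeasurableSpace α] [OpensMeasurableSpace α] {μ : Measure α} {p : ℝ≥0∞} {g k h : α → ℂ}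
    {K : Set α} (hK : IsCompact K) (hg : Continuous g) (hgk : ∀ x ∉ K, ‖g x‖ ≤ ‖k x‖)
    (hh : MemLp h p μ) (hkh : MemLp (fun x => k x * h x) p μ) :
    MemLp (fun x => g x * h x) p μ := by
  obtain ⟨M, hM⟩ := hK.exists_bound_of_continuousOn hg.continuousOn
  refine ((hh.norm.const_mul |M|).add hkh.norm).of_le (hg.aestronglyMeasurable.mul hh.1)
    (.of_forall fun x => ?_)
  refine le_trans ?_ (Real.le_norm_self _)
  simp only [Pi.add_apply, norm_mul]
  have hM₀ : 0 ≤ |M| * ‖h x‖ := by positivity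
  have hk₀ : 0 ≤ ‖k x‖ * ‖h x‖ := by positivity
  by_cases hx : x ∈ K
  · linarith [mul_le_mul_of_nonneg_right ((hM x hx).trans (le_abs_self M)) (norm_nonneg (h x))]
  · linarith [mul_le_mul_of_nonneg_right (hgk x hx) (norm_nonneg (h x))]

theorem MeasureTheory.MemLp.eval_mul_of_X_sub_C_mul {μ : Measure ℝ} {p : ℝ≥0∞} {h : ℝ → ℂ}
    (hh : MemLp h p μ) (a : ℂ) (Q : ℂ[X])
    (hPh : MemLp (fun x : ℝ => ((X - C a) * Q).eval (x : ℂ) * h x) p μ) :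
    MemLp (fun x : ℝ => Q.eval (x : ℂ) * h x) p μ := by
  refine hh.mul_of_norm_le_off_compact (isCompact_closedBall a.re 1)
    (Q.continuous.comp Complex.continuous_ofReal) (fun x hx => ?_) hPh
  have hxa : 1 ≤ ‖(x : ℂ) - a‖ := by
    rw [Metric.mem_closedBall, Real.dist_eq, not_le] at hx
    simpa using hx.le.trans (abs_re_le_norm ((x : ℂ) - a))
  simp only [eval_mul, eval_sub, eval_X, eval_C, norm_mul]
  exact le_mul_of_one_le_left (norm_nonneg _) hxa

section Polynomial

variable {U : L2R ≃ₗᵢ[ℂ] L2R} {h : ℝ → ℂ}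

theorem mem_hardySpace_of_eq_X_sub_C_mul (hU : IsFourierL2 U) (hh : MemLp h 2 volume)
    {P Q : ℂ[X]} (a : ℂ) (hPQ : P = (X - C a) * Q)
    (hQ : ∀ hQh : MemLp (fun x : ℝ => Q.eval (x : ℂ) * h x) 2 volume, hQh.toLp _ ∈ hardySpace U)
    (hPh : MemLp (fun x : ℝ => P.eval (x : ℂ) * h x) 2 volume) : hPh.toLp _ ∈ hardySpace U := by
  subst hPQ
  have hQh := hh.eval_mul_of_X_sub_C_mul a Q hPh
  have hxQh : MemLp (fun x : ℝ => (x : ℂ) * (Q.eval (x : ℂ) * h x)) 2 volume :=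
    (hPh.add (hQh.const_mul a)).ae_eq (.of_forall fun x => by
      simp only [eval_mul, eval_sub, eval_X, eval_C, Pi.add_apply]
      ring)
  have hsplit : hPh.toLp _ = hxQh.toLp _ - a • hQh.toLp _ := by
    rw [← MemLp.toLp_const_smul, ← MemLp.toLp_sub]
    exact MemLp.toLp_congr _ _ (.of_forall fun x => by
      simp only [eval_mul, eval_sub, eval_X, eval_C, Pi.sub_apply, Pi.smul_apply, smul_eq_mul]
      ring)
  rw [hsplit]
  exact Submodule.sub_mem _ (ofReal_mul_mem_hardySpace hU hQh (hQ hQh) hxQh)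
    (Submodule.smul_mem _ a (hQ hQh))

theorem mem_hardySpace_of_eq_C_mul_prod_X_sub_C (hU : IsFourierL2 U) (hh : MemLp h 2 volume)
    (hH : hh.toLp h ∈ hardySpace U) (c : ℂ) (s : Multiset ℂ) {P : ℂ[X]}
    (hP : P = C c * (s.map fun a => X - C a).prod)
    (hPh : MemLp (fun x : ℝ => P.eval (x : ℂ) * h x) 2 volume) : hPh.toLp _ ∈ hardySpace U := by
  induction s using Multiset.induction_on generalizing P with
  | empty =>
    have hc : hPh.toLp _ = c • hh.toLp h := by
      rw [← MemLp.toLp_const_smul]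
      exact MemLp.toLp_congr _ _ (.of_forall fun x => by simp [hP])
    rw [hc]
    exact Submodule.smul_mem _ c hH
  | cons a s ih =>
    refine mem_hardySpace_of_eq_X_sub_C_mul hU hh a ?_ (ih rfl) hPh
    rw [hP, Multiset.map_cons, Multiset.prod_cons]
    ring

end Polynomial

/-- If h ∈ H₊ and P·h ∈ L²(ℝ) for a polynomial P, then P·h ∈ H₊. -/
theorem poly_mul_hardy_mem_hardy
    (U : L2R ≃ₗᵢ[ℂ] L2R) (hU : IsFourierL2 U)
    (h : ℝ → ℂ) (hh : MeasureTheory.MemLp h 2 volume)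
    (hH : InHardy U (hh.toLp h))
    (P : Polynomial ℂ)
    (hPh : MeasureTheory.MemLp (fun x : ℝ => P.eval (x : ℂ) * h x) 2 volume) :
    InHardy U (hPh.toLp _) :=
  mem_hardySpace_of_eq_C_mul_prod_X_sub_C hU hh hH P.leadingCoeff P.roots
    (C_leadingCoeff_mul_prod_multiset_X_sub_C IsAlgClosed.card_roots_eq_natDegree).symm hPh
end
end

section
/- Let P, Q be nonzero polynomials with no common zeros, and h ∈ H₊ such that (P/Q)·h ∈ H₊. Then h/Q ∈ H₊. -/
open MeasureTheory Complex Real Set FourierTransform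
open scoped ENNReal ComplexConjugate

noncomputable section

/-!
Pairing with Schwartz functions, `∫ (U F) φ = ∫ F · 𝓕 φ` (both sides are continuous in `F ∈ L²`
and agree on the dense subspace of Schwartz functions), characterises `H₊` as the set of
`F ∈ L²` orthogonal, in this bilinear sense, to `𝓕 φ` for every Schwartz `φ` supported in
`(-∞, 0)`. Multiplying `𝓕 φ` by a polynomial `A(x)` amounts to applying a differential operator to
`φ`, which does not enlarge its support. A Bézout identity `A P + B Q = 1` gives
`h / Q = A · (P / Q) h + B · h` away from the zeros of `Q`, so the pairing of `h / Q` with `𝓕 φ`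
splits into pairings of `(P / Q) h` and `h` with such test functions, and both vanish. Finally
`|P| + |Q| ≥ δ > 0` bounds `|h / Q|` by `δ⁻¹ (|(P / Q) h| + |h|)`, so `h / Q ∈ L²`.
-/

open scoped SchwartzMap

lemma integral_mul_eq_inner {ψ : ℝ → ℂ} (hψ : MemLp ψ 2 volume) (F : L2R) :
    ∫ x, F x * ψ x = inner ℂ (hψ.star.toLp (star ψ)) F := by
  rw [L2.inner_def]
  refine integral_congr_ae ?_
  filter_upwards [hψ.star.coeFn_toLp] with x hx
  simp [hx, mul_comm]

lemma continuous_integral_mul {ψ : ℝ → ℂ} (hψ : MemLp ψ 2 volume) :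
    Continuous fun F : L2R => ∫ x, F x * ψ x := by
  simp_rw [integral_mul_eq_inner hψ]
  exact continuous_const.inner continuous_id

lemma IsFourierL2.integral_mul_eq_integral_mul_fourier {U : L2R ≃ₗᵢ[ℂ] L2R}
    (hU : IsFourierL2 U) (F : L2R) (φ : 𝓢(ℝ, ℂ)) :
    ∫ x, U F x * φ x = ∫ x, F x * 𝓕 φ x := by
  refine (SchwartzMap.denseRange_toLpCLM (F := ℂ) (p := 2) (μ := volume)
    ENNReal.ofNat_ne_top).induction_on F
    (isClosed_eq ((continuous_integral_mul (φ.memLp 2)).comp U.continuous)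
      (continuous_integral_mul ((𝓕 φ).memLp 2))) ?_
  intro f
  simp only [SchwartzMap.toLpCLM_apply]
  have hUf : U (f.toLp 2) =ᵐ[volume] 𝓕 (f : ℝ → ℂ) := hU f f.integrable (f.memLp 2)
  calc ∫ x, U (f.toLp 2 volume) x * φ x = ∫ x, 𝓕 (f : ℝ → ℂ) x * φ x := by
        refine integral_congr_ae ?_
        filter_upwards [hUf] with x hx
        rw [hx]
    _ = ∫ x, f x * 𝓕 φ x := SchwartzMap.integral_fourier_mul_eq f φ
    _ = ∫ x, f.toLp 2 volume x * 𝓕 φ x := by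
        refine integral_congr_ae ?_
        filter_upwards [f.coeFn_toLp 2] with x hx
        rw [hx]

lemma IsFourierL2.inHardy_iff {U : L2R ≃ₗᵢ[ℂ] L2R} (hU : IsFourierL2 U) (F : L2R) :
    InHardy U F ↔ ∀ φ : 𝓢(ℝ, ℂ), tsupport φ ⊆ Iio 0 → ∫ x, F x * 𝓕 φ x = 0 := by
  refine ⟨fun hF φ hφ => ?_, fun hF => ?_⟩
  · rw [← hU.integral_mul_eq_integral_mul_fourier, integral_eq_zero_of_ae]
    filter_upwards [hF] with x hx
    by_cases hx0 : x < 0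
    · simp [hx hx0]
    · simp [image_eq_zero_of_notMem_tsupport fun hmem => hx0 (hφ hmem)]
  · refine isOpen_Iio.ae_eq_zero_of_integral_contDiff_smul_eq_zero
      (((Lp.memLp (U F)).locallyIntegrable (by norm_num)).locallyIntegrableOn _)
      fun g hg hgc hgs => ?_
    let φ : 𝓢(ℝ, ℂ) := (hgc.comp_left (g := ((↑) : ℝ → ℂ)) ofReal_zero).toSchwartzMap
      (ofRealCLM.contDiff.comp hg)
    have hφ : tsupport φ ⊆ Iio 0 := (tsupport_comp_subset ofReal_zero g).trans hgs
    rw [← hF φ hφ, ← hU.integral_mul_eq_integral_mul_fourier]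
    simp only [real_smul, mul_comm]
    rfl

lemma SchwartzMap.exists_fourier_eq_eval_mul (A : Polynomial ℂ) (φ : 𝓢(ℝ, ℂ)) :
    ∃ ψ : 𝓢(ℝ, ℂ), tsupport ψ ⊆ tsupport φ ∧ ∀ x : ℝ, 𝓕 ψ x = A.eval (x : ℂ) * 𝓕 φ x := by
  induction A using Polynomial.induction_on with
  | C a =>
    refine ⟨a • φ, tsupport_smul_subset_right (fun _ => a) φ, fun x => ?_⟩
    rw [FourierSMul.fourier_smul, Polynomial.eval_C]
    rfl
  | add p q hp hq =>
    obtain ⟨ψ₁, hψ₁, hFψ₁⟩ := hp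
    obtain ⟨ψ₂, hψ₂, hFψ₂⟩ := hq
    refine ⟨ψ₁ + ψ₂, (tsupport_add (ψ₁ : ℝ → ℂ) ψ₂).trans (union_subset hψ₁ hψ₂), fun x => ?_⟩
    rw [FourierAdd.fourier_add, add_apply, hFψ₁, hFψ₂, Polynomial.eval_add, add_mul]
  | monomial n a ih =>
    obtain ⟨ψ, hψ, hFψ⟩ := ih
    have hsupp : tsupport ((2 * π * I)⁻¹ • derivCLM ℂ ℂ ψ) ⊆ tsupport φ :=
      (tsupport_smul_subset_right (fun _ => (2 * π * I)⁻¹) (derivCLM ℂ ℂ ψ : ℝ → ℂ)).trans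
        ((tsupport_derivCLM_subset ℂ ψ).trans hψ)
    refine ⟨(2 * π * I)⁻¹ • derivCLM ℂ ℂ ψ, hsupp, fun x => ?_⟩
    have h2πI : 2 * (π : ℂ) * I ≠ 0 := by simp [pi_ne_zero, I_ne_zero]
    have hderiv : 𝓕 (derivCLM ℂ ℂ ψ) x = 2 * π * I * x * 𝓕 ψ x :=
      congrFun (Real.fourier_deriv ψ.integrable ψ.differentiable (derivCLM ℂ ℂ ψ).integrable) x
    rw [FourierSMul.fourier_smul, smul_apply, hderiv, hFψ]
    simp only [smul_eq_mul, Polynomial.eval_mul, Polynomial.eval_C, Polynomial.eval_pow,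
      Polynomial.eval_X]
    field_simp
    ring

lemma Polynomial.ae_eval_ofReal_ne_zero {Q : Polynomial ℂ} (hQ : Q ≠ 0) :
    ∀ᵐ x : ℝ, Q.eval (x : ℂ) ≠ 0 := by
  refine measure_mono_null (fun x hx => ?_) (((Q.finite_setOfPred_isRoot hQ).preimage
    ofReal_injective.injOn).measure_zero volume)
  simpa using hx

lemma Polynomial.exists_pos_le_norm_eval_add_norm_eval {P Q : Polynomial ℂ} (hQ : Q ≠ 0)
    (hco : ∀ z : ℂ, ¬ (P.eval z = 0 ∧ Q.eval z = 0)) :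
    ∃ δ : ℝ, 0 < δ ∧ ∀ z : ℂ, δ ≤ ‖P.eval z‖ + ‖Q.eval z‖ := by
  have hpos (z : ℂ) : 0 < ‖P.eval z‖ + ‖Q.eval z‖ :=
    (not_and_or.1 (hco z)).elim
      (fun hP => add_pos_of_pos_of_nonneg (norm_pos_iff.2 hP) (norm_nonneg _))
      (fun hQ => add_pos_of_nonneg_of_pos (norm_nonneg _) (norm_pos_iff.2 hQ))
  rcases lt_or_ge 0 Q.degree with hdeg | hdeg
  · have hcont : Continuous fun z => ‖P.eval z‖ + ‖Q.eval z‖ := by fun_prop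
    have hcoc : Filter.Tendsto (fun z => ‖P.eval z‖ + ‖Q.eval z‖) (Filter.cocompact ℂ)
        Filter.atTop :=
      Filter.tendsto_atTop_mono (fun z => le_add_of_nonneg_left (norm_nonneg _))
        (Q.tendsto_norm_atTop hdeg tendsto_norm_cocompact_atTop)
    obtain ⟨z₀, hz₀⟩ := hcont.exists_forall_le hcoc
    exact ⟨_, hpos z₀, hz₀⟩
  · refine ⟨‖Q.coeff 0‖, norm_pos_iff.2 fun h0 => hQ ?_, fun z => ?_⟩
    · rw [eq_C_of_degree_le_zero hdeg, h0, map_zero]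
    · rw [eq_C_of_degree_le_zero hdeg]
      simp

lemma memLp_div_eval_of_memLp_div_eval_mul {p : ℝ≥0∞} {μ : Measure ℝ} {P Q : Polynomial ℂ}
    {δ : ℝ} (hδ : 0 < δ) (hbound : ∀ z : ℂ, δ ≤ ‖P.eval z‖ + ‖Q.eval z‖) {h : ℝ → ℂ}
    (hh : MemLp h p μ) (hg : MemLp (fun x : ℝ => P.eval (x : ℂ) / Q.eval (x : ℂ) * h x) p μ) :
    MemLp (fun x : ℝ => h x / Q.eval (x : ℂ)) p μ := by
  have hmeas : AEStronglyMeasurable (fun x : ℝ => h x / Q.eval (x : ℂ)) μ :=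
    hh.1.div₀ (by fun_prop : Continuous fun x : ℝ => Q.eval (x : ℂ)).aestronglyMeasurable
  refine (hg.norm.add hh.norm).of_le_mul hmeas (c := δ⁻¹) (.of_forall fun x => ?_)
  rw [Pi.add_apply, Real.norm_of_nonneg (by positivity), inv_mul_eq_div, le_div_iff₀ hδ]
  rcases eq_or_ne (Q.eval (x : ℂ)) 0 with hx | hx
  · simp only [hx, div_zero, norm_zero, zero_mul]
    positivity
  · calc ‖h x / Q.eval (x : ℂ)‖ * δ
        ≤ ‖h x / Q.eval (x : ℂ)‖ * (‖P.eval (x : ℂ)‖ + ‖Q.eval (x : ℂ)‖) := by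
          gcongr; exact hbound x
      _ = ‖P.eval (x : ℂ) / Q.eval (x : ℂ) * h x‖ + ‖h x‖ := by
          simp only [norm_mul, norm_div]
          field_simp

theorem hardy_div_mem_hardy_general
    (U : L2R ≃ₗᵢ[ℂ] L2R) (hU : IsFourierL2 U)
    (P Q : Polynomial ℂ) (hQ : Q ≠ 0)
    (hco : ∀ z : ℂ, ¬ (P.eval z = 0 ∧ Q.eval z = 0))
    (h : ℝ → ℂ) (hh : MeasureTheory.MemLp h 2 volume)
    (hH : InHardy U (hh.toLp h))
    (hg : MeasureTheory.MemLp (fun x : ℝ => P.eval (x : ℂ) / Q.eval (x : ℂ) * h x) 2 volume)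
    (hgH : InHardy U (hg.toLp _)) :
    ∃ hq : MeasureTheory.MemLp (fun x : ℝ => h x / Q.eval (x : ℂ)) 2 volume,
      InHardy U (hq.toLp _) := by
  obtain ⟨A, B, hAB⟩ : IsCoprime P Q :=
    (Polynomial.isCoprime_iff_aeval_ne_zero_of_isAlgClosed ℂ ℂ P Q).2 fun z => by
      simpa using not_and_or.1 (hco z)
  obtain ⟨δ, hδ, hbound⟩ := Polynomial.exists_pos_le_norm_eval_add_norm_eval hQ hco
  have hq := memLp_div_eval_of_memLp_div_eval_mul hδ hbound hh hg
  refine ⟨hq, (hU.inHardy_iff _).2 fun φ hφ => ?_⟩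
  obtain ⟨ψA, hψA, hFψA⟩ := φ.exists_fourier_eq_eval_mul A
  obtain ⟨ψB, hψB, hFψB⟩ := φ.exists_fourier_eq_eval_mul B
  have hsplit : ∀ᵐ x : ℝ, hq.toLp _ x * 𝓕 φ x =
      hg.toLp _ x * 𝓕 ψA x + hh.toLp h x * 𝓕 ψB x := by
    filter_upwards [Q.ae_eval_ofReal_ne_zero hQ, hq.coeFn_toLp, hg.coeFn_toLp, hh.coeFn_toLp]
      with x hx hqx hgx hhx
    have hABx : A.eval (x : ℂ) * P.eval (x : ℂ) + B.eval (x : ℂ) * Q.eval (x : ℂ) = 1 := by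
      simpa using congrArg (Polynomial.eval (x : ℂ)) hAB
    rw [hqx, hgx, hhx, hFψA, hFψB]
    field_simp
    linear_combination -(h x * 𝓕 φ x) * hABx
  rw [integral_congr_ae hsplit,
    integral_add ((Lp.memLp _).integrable_mul ((𝓕 ψA).memLp 2))
      ((Lp.memLp _).integrable_mul ((𝓕 ψB).memLp 2)),
    (hU.inHardy_iff _).1 hgH ψA (hψA.trans hφ), (hU.inHardy_iff _).1 hH ψB (hψB.trans hφ),
    add_zero]

/-- If P, Q have no common zeros, h ∈ H₊ and (P/Q)h ∈ H₊, then h/Q ∈ H₊. -/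
theorem hardy_div_mem_hardy
    (U : L2R ≃ₗᵢ[ℂ] L2R) (hU : IsFourierL2 U)
    (P Q : Polynomial ℂ) (hP : P ≠ 0) (hQ : Q ≠ 0)
    (hco : ∀ z : ℂ, ¬ (P.eval z = 0 ∧ Q.eval z = 0))
    (h : ℝ → ℂ) (hh : MeasureTheory.MemLp h 2 volume)
    (hH : InHardy U (hh.toLp h))
    (hg : MeasureTheory.MemLp (fun x : ℝ => P.eval (x : ℂ) / Q.eval (x : ℂ) * h x) 2 volume)
    (hgH : InHardy U (hg.toLp _)) :
    ∃ hq : MeasureTheory.MemLp (fun x : ℝ => h x / Q.eval (x : ℂ)) 2 volume,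
      InHardy U (hq.toLp _) :=
  hardy_div_mem_hardy_general U hU P Q hQ hco h hh hH hg hgH

end
end

section
/- Let κ : ℝ → ℂ be measurable, let p ∈ (0,∞]. Then κ is proper if and only if there exists a real-valued measurable function j on ℝ with j/(1+x²) integrable such that κ·e^j ∈ L^p(ℝ). -/
/-!
The weight `(1 + x²)⁻¹ dx` is `π` times the standard Cauchy measure, a probability measure
dominated by Lebesgue measure. If `κ e^j ∈ Lᵖ(dx)`, then `κ e^j ∈ L^min(p,1)` of the Cauchy
measure, so `log (1 + |κ e^j|)` is Cauchy-integrable because `log (1 + t) ≤ tʳ / r` for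
`0 < r ≤ 1`; and `log (1 + |κ|) ≤ log (1 + |κ e^j|) + |j|`. Conversely,
`j = -c log (1 + x²) - log (1 + |κ|)` gives `|κ e^j| ≤ (1 + x²)^(-c)`, which lies in `Lᵖ`
as soon as `c > 1 / (2p)`.
-/

open MeasureTheory Real
open scoped ENNReal

noncomputable section

/-- A measurable symbol κ is proper iff ln(1+|κ|)/(1+x²) is integrable on ℝ. -/
def ProperSymbol (κ : ℝ → ℂ) : Prop :=
  MeasureTheory.Integrable (fun x : ℝ => Real.log (1 + ‖κ x‖) / (1 + x ^ 2))

open ProbabilityTheory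

namespace Real

lemma log_one_add_le_rpow_div {t r : ℝ} (ht : 0 ≤ t) (hr₀ : 0 < r) (hr₁ : r ≤ 1) :
    log (1 + t) ≤ t ^ r / r := by
  have hpos : 0 < 1 + t := by positivity
  have hsub : (1 + t) ^ r ≤ 1 + t ^ r := by
    simpa only [one_rpow] using rpow_add_le_add_rpow zero_le_one ht hr₀.le hr₁
  calc log (1 + t) = log ((1 + t) ^ r) / r := by rw [log_rpow hpos]; field_simp
    _ ≤ ((1 + t) ^ r - 1) / r := by gcongr; exact log_le_sub_one_of_pos (by positivity)
    _ ≤ t ^ r / r := by gcongr; linarith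

lemma log_one_add_le_log_one_add_mul_exp_add_abs {a : ℝ} (ha : 0 ≤ a) (t : ℝ) :
    log (1 + a) ≤ log (1 + a * exp t) + |t| := by
  have h₁ : 1 ≤ exp |t| := one_le_exp (abs_nonneg t)
  have h₂ : 1 ≤ exp t * exp |t| := by
    rw [← exp_add]; exact one_le_exp (by linarith [neg_abs_le t])
  have key : 1 + a ≤ (1 + a * exp t) * exp |t| := by nlinarith
  calc log (1 + a) ≤ log ((1 + a * exp t) * exp |t|) := log_le_log (by positivity) key
    _ = log (1 + a * exp t) + |t| := by rw [log_mul (by positivity) (exp_ne_zero _), log_exp]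

end Real

theorem MeasureTheory.MemLp.integrable_log_one_add_norm {α E : Type*} {m : MeasurableSpace α}
    {μ : Measure α} [IsFiniteMeasure μ] [NormedAddCommGroup E] {g : α → E} {p : ℝ≥0∞}
    (hp : p ≠ 0) (hg : MemLp g p μ) :
    Integrable (fun x => log (1 + ‖g x‖)) μ := by
  set q := min p 1
  have hq₀ : q ≠ 0 := by simp [q, hp]
  have hq_top : q ≠ ∞ := ne_top_of_le_ne_top ENNReal.one_ne_top (min_le_right _ _)
  have hq_pos : 0 < q.toReal := ENNReal.toReal_pos hq₀ hq_top
  have hq_le : q.toReal ≤ 1 := by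
    simpa using ENNReal.toReal_mono ENNReal.one_ne_top (min_le_right p 1)
  have hint : Integrable (fun x => ‖g x‖ ^ q.toReal) μ :=
    (hg.mono_exponent (min_le_left p 1)).integrable_norm_rpow hq₀ hq_top
  refine (hint.div_const q.toReal).mono'
    (measurable_log.comp_aemeasurable (hg.1.norm.aemeasurable.const_add 1)).aestronglyMeasurable
    (ae_of_all _ fun x => ?_)
  rw [norm_of_nonneg (log_nonneg (by simp))]
  exact log_one_add_le_rpow_div (norm_nonneg _) hq_pos hq_le

lemma memLp_one_add_sq_rpow_neg {p : ℝ≥0∞} {c : ℝ} (hc : (2 * p.toReal)⁻¹ < c) :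
    MemLp (fun x : ℝ => (1 + x ^ 2) ^ (-c)) p volume := by
  have hc₀ : 0 < c := lt_of_le_of_lt (by positivity) hc
  have hmeas : AEStronglyMeasurable (fun x : ℝ => (1 + x ^ 2) ^ (-c)) volume :=
    (by fun_prop : Measurable fun x : ℝ => (1 + x ^ 2) ^ (-c)).aestronglyMeasurable
  by_cases hp_top : p = ∞
  · subst hp_top
    refine memLp_top_of_bound hmeas 1 (ae_of_all _ fun x => ?_)
    rw [norm_of_nonneg (by positivity)]
    exact rpow_le_one_of_one_le_of_nonpos (by nlinarith) (by linarith)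
  by_cases hp₀ : p = 0
  · subst hp₀
    exact memLp_zero_iff_aestronglyMeasurable.2 hmeas
  rw [← integrable_norm_rpow_iff hmeas hp₀ hp_top]
  have hr : (Module.finrank ℝ ℝ : ℝ) < 2 * c * p.toReal := by
    rw [inv_lt_iff_one_lt_mul₀ (mul_pos two_pos (ENNReal.toReal_pos hp₀ hp_top))] at hc
    simp only [Module.finrank_self, Nat.cast_one]
    linarith
  refine (integrable_rpow_neg_one_add_norm_sq hr).congr (ae_of_all _ fun x => ?_)
  dsimp only
  rw [norm_eq_abs, sq_abs, norm_of_nonneg (by positivity), ← rpow_mul (by positivity)]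
  ring_nf

lemma cauchyPDFReal_zero_one (x : ℝ) : cauchyPDFReal 0 1 x = π⁻¹ * (1 + x ^ 2)⁻¹ := by
  simp [cauchyPDFReal_def, add_comm]

lemma integrable_cauchyMeasure_zero_one_iff {f : ℝ → ℝ} :
    Integrable f (cauchyMeasure 0 1) ↔ Integrable (fun x => f x / (1 + x ^ 2)) := by
  rw [cauchyMeasure_of_scale_ne_zero _ one_ne_zero, integrable_withDensity_iff_integrable_smul'
    (measurable_cauchyPDF 0 1) (ae_of_all _ fun _ => ENNReal.ofReal_lt_top)]
  simp_rw [cauchyPDF_def, ENNReal.toReal_ofReal (cauchyPDF_pos 0 one_ne_zero _).le,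
    cauchyPDFReal_zero_one, smul_eq_mul, mul_assoc,
    integrable_const_mul_iff (isUnit_iff_ne_zero.2 (inv_ne_zero pi_ne_zero)), inv_mul_eq_div]

lemma cauchyMeasure_zero_one_le_volume : cauchyMeasure 0 1 ≤ volume := by
  rw [cauchyMeasure_of_scale_ne_zero _ one_ne_zero]
  calc volume.withDensity (cauchyPDF 0 1) ≤ volume.withDensity 1 :=
        withDensity_mono (ae_of_all _ fun x => ?_)
    _ = volume := withDensity_one
  rw [cauchyPDF_def, cauchyPDFReal_zero_one, Pi.one_apply, ENNReal.ofReal_le_one]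
  exact mul_le_one₀ (inv_le_one_of_one_le₀ (by linarith [pi_gt_three])) (by positivity)
    (inv_le_one_of_one_le₀ (by nlinarith))

lemma integrable_one_add_sq_rpow_cauchyMeasure {s : ℝ} (hs : s < 1 / 2) :
    Integrable (fun x : ℝ => (1 + x ^ 2) ^ s) (cauchyMeasure 0 1) := by
  rw [integrable_cauchyMeasure_zero_one_iff]
  have hr : (Module.finrank ℝ ℝ : ℝ) < 2 * (1 - s) := by
    simp only [Module.finrank_self, Nat.cast_one]
    linarith
  refine (integrable_rpow_neg_one_add_norm_sq hr).congr (ae_of_all _ fun x => ?_)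
  dsimp only
  rw [norm_eq_abs, sq_abs, ← rpow_sub_one (by positivity)]
  ring_nf

lemma integrable_log_one_add_sq_cauchyMeasure :
    Integrable (fun x : ℝ => log (1 + x ^ 2)) (cauchyMeasure 0 1) := by
  refine ((integrable_one_add_sq_rpow_cauchyMeasure (s := 1 / 4) (by norm_num)).div_const
    (1 / 4)).mono' (by fun_prop : Measurable fun x : ℝ => 1 + x ^ 2).log.aestronglyMeasurable
    (ae_of_all _ fun x => ?_)
  rw [norm_of_nonneg (log_nonneg (by nlinarith))]
  exact log_le_rpow_div (by positivity) (by norm_num)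

lemma norm_mul_exp_sub_log_one_add_norm_le (z : ℂ) (t : ℝ) :
    ‖z * (exp (t - log (1 + ‖z‖)) : ℂ)‖ ≤ exp t := by
  rw [norm_mul, Complex.norm_real, norm_of_nonneg (exp_pos _).le, exp_sub,
    exp_log (by positivity), mul_div_left_comm]
  exact mul_le_of_le_one_right (exp_pos t).le (div_le_one_of_le₀ (by linarith) (by positivity))

/-- For any p ∈ (0,∞], κ is proper iff κ·e^j ∈ L^p(ℝ) for some real-valued j with
j/(1+x²) integrable. -/
theorem properSymbol_iff_exists_exp_weight
    (p : ℝ≥0∞) (hp : 0 < p) (κ : ℝ → ℂ) (hκ : Measurable κ) :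
    ProperSymbol κ ↔
      ∃ j : ℝ → ℝ, Measurable j ∧
        MeasureTheory.Integrable (fun x : ℝ => j x / (1 + x ^ 2)) ∧
        MeasureTheory.MemLp (fun x : ℝ => κ x * Real.exp (j x)) p volume := by
  simp_rw [ProperSymbol, ← integrable_cauchyMeasure_zero_one_iff]
  constructor
  · intro hκ_int
    set c : ℝ := (2 * p.toReal)⁻¹ + 1
    refine ⟨fun x => log (1 + x ^ 2) * -c - log (1 + ‖κ x‖), by fun_prop,
      (integrable_log_one_add_sq_cauchyMeasure.mul_const _).sub hκ_int, ?_⟩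
    refine (memLp_one_add_sq_rpow_neg (p := p) (c := c) (lt_add_one _)).of_le (by fun_prop)
      (ae_of_all _ fun x => ?_)
    rw [norm_of_nonneg (by positivity), rpow_def_of_pos (by positivity)]
    exact norm_mul_exp_sub_log_one_add_norm_le _ _
  · rintro ⟨j, -, hj_int, hmem⟩
    have hlog := (hmem.mono_measure cauchyMeasure_zero_one_le_volume).integrable_log_one_add_norm
      hp.ne'
    refine (hlog.add hj_int.abs).mono' (hκ.norm.const_add 1).log.aestronglyMeasurable
      (ae_of_all _ fun x => ?_)
    rw [norm_of_nonneg (log_nonneg (by simp))]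
    simpa [norm_mul, abs_of_pos (exp_pos _)] using
      log_one_add_le_log_one_add_mul_exp_add_abs (norm_nonneg (κ x)) (j x)
end
end

section
/- Let κ : ℝ → ℂ be measurable with W_κ densely defined. Then W_κ is symmetric (W_κ ⊆ W_κ*) if and only if κ is real-valued a.e. -/
open MeasureTheory Complex Real Set FourierTransform
open scoped ENNReal ComplexConjugate

noncomputable section

/-- The domain of the Wiener–Hopf operator W_κ, in the model of L²(ℝ₊) as the
subspace of L²(ℝ) of functions vanishing a.e. on (-∞,0]. -/
def WHDom (U : L2R ≃ₗᵢ[ℂ] L2R) (κ : ℝ → ℂ) : Set L2R :=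
  {g : L2R | (∀ᵐ x : ℝ, x ≤ 0 → g x = 0) ∧
    MeasureTheory.MemLp (fun x : ℝ => κ x * (U.symm g) x) 2 volume}

open Filter Topology
open scoped InnerProductSpace

/-!
Write `G = U⁻¹ g` for `g` in the domain. Symmetry says that `(κ - κ̄) G` is orthogonal to
`U⁻¹ g'` for every `g'` in the domain; by density its image under `U` is orthogonal to all
functions supported in `[0, ∞)`, i.e. it vanishes on `(0, ∞)`. The domain is invariant under the
translations `g ↦ g (· - a)`, `a ≥ 0`, which `U⁻¹` turns into multiplication by `e^{2πiax}`;
so `U ((κ - κ̄) G)` vanishes on every `(-a, ∞)`, hence `(κ - κ̄) G = 0`: each `U⁻¹ g` vanishes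
where `Im κ ≠ 0`. This closed condition passes to the closure of the domain, which contains
`ξ₊ e^{-ξ}`, and the inverse Fourier transform `(1 - 2πix)⁻²` of that function vanishes nowhere.
-/

namespace MeasureTheory.Lp

variable {α E : Type*} [MeasurableSpace α] {μ : Measure α}

theorem isClosed_setOf_ae_restrict_eq_zero [NormedAddCommGroup E] [NormedSpace ℝ E]
    (p : ENNReal) [Fact (1 ≤ p)] (s : Set α) :
    IsClosed {f : Lp E p μ | f =ᵐ[μ.restrict s] 0} := by
  have h : {f : Lp E p μ | f =ᵐ[μ.restrict s] 0} = LpToLpRestrictCLM α E ℝ μ p s ⁻¹' {0} := by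
    ext f
    rw [mem_preimage, mem_singleton_iff, Lp.eq_zero_iff_ae_eq_zero]
    exact ⟨(LpToLpRestrictCLM_coeFn ℝ s f).trans, (LpToLpRestrictCLM_coeFn ℝ s f).symm.trans⟩
  rw [h]
  exact isClosed_singleton.preimage (LpToLpRestrictCLM α E ℝ μ p s).continuous

theorem ae_restrict_eq_zero_of_forall_inner_eq_zero {𝕜 : Type*} [RCLike 𝕜] [NormedAddCommGroup E]
    [InnerProductSpace 𝕜 E] {s : Set α} (hs : MeasurableSet s) {f : Lp E 2 μ}
    (h : ∀ g : Lp E 2 μ, g =ᵐ[μ.restrict sᶜ] 0 → ⟪g, f⟫_𝕜 = 0) : f =ᵐ[μ.restrict s] 0 := by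
  have hfs : MemLp (s.indicator f) 2 μ := (Lp.memLp f).indicator hs
  set g : Lp E 2 μ := hfs.toLp _
  have hg : g =ᵐ[μ] s.indicator f := hfs.coeFn_toLp
  have hg_off : g =ᵐ[μ.restrict sᶜ] 0 := by
    refine (ae_restrict_iff' hs.compl).2 ?_
    filter_upwards [hg] with x hx hxs
    rw [hx, indicator_of_notMem hxs, Pi.zero_apply]
  -- `⟪1ₛ f, f⟫ = ‖1ₛ f‖²`
  have hg_zero : g = 0 := by
    rw [← inner_self_eq_zero (𝕜 := 𝕜), ← h g hg_off, L2.inner_def, L2.inner_def]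
    refine integral_congr_ae ?_
    filter_upwards [hg] with x hx
    rw [hx]
    by_cases hxs : x ∈ s <;> simp [hxs]
  refine (ae_restrict_iff' hs).2 ?_
  filter_upwards [hg, Lp.eq_zero_iff_ae_eq_zero.1 hg_zero] with x hx hx0 hxs
  rwa [← indicator_of_mem hxs f, ← hx]

end MeasureTheory.Lp

theorem MeasureTheory.Integrable.memLp_two_of_norm_le {α E : Type*} [MeasurableSpace α]
    {μ : Measure α} [NormedAddCommGroup E] {f : α → E} (hf : Integrable f μ) {C : ℝ}
    (hC : ∀ᵐ x ∂μ, ‖f x‖ ≤ C) : MemLp f 2 μ := by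
  rw [memLp_two_iff_integrable_sq_norm hf.1]
  refine (hf.norm.const_mul C).mono' (hf.1.norm.pow 2) ?_
  filter_upwards [hC] with x hx
  rw [Real.norm_of_nonneg (by positivity), sq]
  exact mul_le_mul_of_nonneg_right hx (norm_nonneg _)

section ModulationTranslation

variable {E : Type*} [NormedAddCommGroup E] [NormedSpace ℂ E]

theorem Real.fourier_fourierChar_smul (f : ℝ → E) (a w : ℝ) :
    𝓕 (fun x => 𝐞 (a * x) • f x) w = 𝓕 f (w - a) := by
  simp only [Real.fourier_real_eq, smul_smul, ← AddChar.map_add_eq_mul]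
  congr 1 with v
  ring_nf

theorem MeasureTheory.MemLp.fourierChar_smul {p : ENNReal} {μ : Measure ℝ} {f : ℝ → E}
    (hf : MemLp f p μ) (a : ℝ) : MemLp (fun x => 𝐞 (a * x) • f x) p μ :=
  hf.of_le ((Real.continuous_fourierChar.comp (continuous_const_mul a)).aestronglyMeasurable.smul
    hf.1) (.of_forall fun x => by simp [Circle.smul_def, norm_smul, Circle.norm_coe])

def modulation {p : ENNReal} {μ : Measure ℝ} (a : ℝ) (f : Lp E p μ) : Lp E p μ :=
  ((Lp.memLp f).fourierChar_smul a).toLp _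

theorem coeFn_modulation {p : ENNReal} {μ : Measure ℝ} (a : ℝ) (f : Lp E p μ) :
    modulation a f =ᵐ[μ] fun x => 𝐞 (a * x) • f x :=
  MemLp.coeFn_toLp _

theorem isometry_modulation {p : ENNReal} [Fact (1 ≤ p)] {μ : Measure ℝ} (a : ℝ) :
    Isometry (modulation (E := E) (p := p) (μ := μ) a) := by
  refine Isometry.of_dist_eq fun f g => ?_
  rw [Lp.dist_def, Lp.dist_def]
  congr 1
  refine eLpNorm_congr_norm_ae ?_
  filter_upwards [coeFn_modulation a f, coeFn_modulation a g] with x hf hg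
  simp [hf, hg, ← smul_sub, Circle.smul_def, norm_smul, Circle.norm_coe]

def translation {p : ENNReal} [Fact (1 ≤ p)] (a : ℝ) :
    Lp E p (volume : Measure ℝ) →ₗᵢ[ℂ] Lp E p (volume : Measure ℝ) :=
  Lp.compMeasurePreservingₗᵢ ℂ (fun x : ℝ => x - a)
    (measurePreserving_sub_right (volume : Measure ℝ) a)

theorem coeFn_translation {p : ENNReal} [Fact (1 ≤ p)] (a : ℝ)
    (f : Lp E p (volume : Measure ℝ)) :
    translation a f =ᵐ[volume] fun x => f (x - a) :=
  Lp.coeFn_compMeasurePreserving f _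

theorem eq_zero_of_forall_translation_eq_zero_on_Ioi {p : ENNReal} [Fact (1 ≤ p)]
    {f : Lp E p (volume : Measure ℝ)}
    (h : ∀ a : ℝ, 0 ≤ a → translation a f =ᵐ[volume.restrict (Ioi 0)] 0) : f = 0 := by
  have hn : ∀ n : ℕ, ∀ᵐ x : ℝ, -(n : ℝ) < x → f x = 0 := by
    intro n
    have h₁ := (ae_restrict_iff' measurableSet_Ioi).1 (h n n.cast_nonneg)
    filter_upwards [(measurePreserving_add_right volume (n : ℝ)).quasiMeasurePreserving.ae
      (h₁.and (coeFn_translation (n : ℝ) f))] with x hx hxn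
    simpa [hx.2] using hx.1 (show (0 : ℝ) < x + n by linarith)
  rw [Lp.eq_zero_iff_ae_eq_zero]
  filter_upwards [ae_all_iff.2 hn] with x hx
  obtain ⟨n, hn⟩ := exists_nat_gt (-x)
  exact hx n (by linarith)

end ModulationTranslation

theorem norm_cexp_neg_mul_ofReal (c : ℂ) (t : ℝ) : ‖cexp (-(c * t))‖ = rexp (-c.re * t) := by
  simp [Complex.norm_exp]

theorem integrableOn_Ioi_mul_cexp_neg_mul {c : ℂ} (hc : 0 < c.re) :
    IntegrableOn (fun t : ℝ => (t : ℂ) * cexp (-(c * t))) (Ioi 0) := by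
  have h := integrableOn_rpow_mul_exp_neg_mul_rpow (s := 1) (p := 1) (by norm_num) one_pos hc
  simp only [Real.rpow_one] at h
  refine h.mono' (by fun_prop) ((ae_restrict_iff' measurableSet_Ioi).2 (.of_forall fun t ht => ?_))
  rw [norm_mul, norm_cexp_neg_mul_ofReal, Complex.norm_real, Real.norm_of_nonneg ht.le]

theorem integral_Ioi_mul_cexp_neg_mul {c : ℂ} (hc : 0 < c.re) :
    ∫ t in Ioi (0 : ℝ), (t : ℂ) * cexp (-(c * t)) = (c ^ 2)⁻¹ := by
  have hc0 : c ≠ 0 := fun h => by simp [h] at hc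
  have hexp : Tendsto (fun t : ℝ => cexp (-(c * t))) atTop (𝓝 0) := by
    rw [Complex.tendsto_exp_nhds_zero_iff]
    simpa using tendsto_id.const_mul_atTop hc
  have hmul_exp : Tendsto (fun t : ℝ => (t : ℂ) * cexp (-(c * t))) atTop (𝓝 0) := by
    rw [tendsto_zero_iff_norm_tendsto_zero]
    refine (tendsto_rpow_mul_exp_neg_mul_atTop_nhds_zero 1 c.re hc).congr' ?_
    filter_upwards [eventually_ge_atTop 0] with t ht
    rw [norm_mul, norm_cexp_neg_mul_ofReal, Complex.norm_real, Real.norm_of_nonneg ht,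
      Real.rpow_one]
  -- the antiderivative is `-(t / c + 1 / c²) e^{-ct}`
  have hderiv : ∀ t : ℝ, HasDerivAt (fun t : ℝ => -((t : ℂ) * c⁻¹ + (c ^ 2)⁻¹) * cexp (-(c * t)))
      ((t : ℂ) * cexp (-(c * t))) t := by
    intro t
    have hlin : HasDerivAt (fun t : ℝ => (t : ℂ)) 1 t := (hasDerivAt_id t).ofReal_comp
    refine ((((hlin.mul_const c⁻¹).add_const (c ^ 2)⁻¹).neg).mul
      ((hlin.const_mul c).neg.cexp)).congr_deriv ?_
    simp only [Pi.neg_apply]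
    field_simp
    ring
  have hlim :
      Tendsto (fun t : ℝ => -((t : ℂ) * c⁻¹ + (c ^ 2)⁻¹) * cexp (-(c * t))) atTop (𝓝 0) := by
    have := (hmul_exp.const_mul c⁻¹).add (hexp.const_mul (c ^ 2)⁻¹)
    simp only [mul_zero, add_zero] at this
    convert this.neg using 1
    · ext t; ring
    · simp
  rw [integral_Ioi_of_hasDerivAt_of_tendsto' (fun t _ => hderiv t)
    (integrableOn_Ioi_mul_cexp_neg_mul hc) hlim]
  simp

/-- `ξ₊ e^{-ξ}`: the factor `ξ₊` makes it continuous at `0`, so that its inverse Fourier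
transform is integrable and Fourier inversion applies. -/
def posMulExpNeg (ξ : ℝ) : ℂ := (max ξ 0 : ℝ) * cexp (-ξ)

theorem continuous_posMulExpNeg : Continuous posMulExpNeg := by
  unfold posMulExpNeg; fun_prop

theorem posMulExpNeg_of_nonpos {ξ : ℝ} (hξ : ξ ≤ 0) : posMulExpNeg ξ = 0 := by
  simp [posMulExpNeg, max_eq_right hξ]

theorem posMulExpNeg_of_nonneg {ξ : ℝ} (hξ : 0 ≤ ξ) : posMulExpNeg ξ = ξ * cexp (-ξ) := by
  simp [posMulExpNeg, max_eq_left hξ]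

theorem integrable_posMulExpNeg : Integrable posMulExpNeg := by
  rw [← integrableOn_iff_integrable_of_support_subset (s := Ioi 0)]
  · exact (integrableOn_Ioi_mul_cexp_neg_mul (c := 1) (by simp)).congr_fun
      (fun ξ hξ => by simp [posMulExpNeg_of_nonneg hξ.le]) measurableSet_Ioi
  · intro ξ hξ
    by_contra h
    exact hξ (posMulExpNeg_of_nonpos (not_lt.1 h))

theorem fourierInv_posMulExpNeg (x : ℝ) :
    𝓕⁻ posMulExpNeg x = ((1 - 2 * π * x * I) ^ 2)⁻¹ := by
  rw [Real.fourierInv_eq_fourier_neg, Real.fourier_real_eq,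
    ← setIntegral_eq_integral_of_forall_compl_eq_zero (s := Ioi 0) fun ξ hξ => by
      rw [posMulExpNeg_of_nonpos (not_lt.1 hξ), smul_zero],
    ← integral_Ioi_mul_cexp_neg_mul (c := 1 - 2 * π * x * I) (by simp)]
  refine setIntegral_congr_fun measurableSet_Ioi fun ξ hξ => ?_
  rw [posMulExpNeg_of_nonneg hξ.le, Circle.smul_def, Real.fourierChar_apply, smul_eq_mul,
    mul_left_comm, ← Complex.exp_add]
  congr 2
  push_cast
  ring

theorem norm_inv_one_sub_two_pi_mul_I_sq (x : ℝ) :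
    ‖((1 - 2 * π * x * I) ^ 2)⁻¹‖ = (1 + (2 * π * x) ^ 2)⁻¹ := by
  have h : 1 - 2 * π * x * I = (1 : ℝ) + (-(2 * π * x) : ℝ) * I := by push_cast; ring
  rw [norm_inv, norm_pow, h, Complex.norm_add_mul_I, Real.sq_sqrt (by positivity)]
  ring

theorem one_sub_two_pi_mul_I_ne_zero (x : ℝ) : 1 - 2 * π * x * I ≠ 0 := fun h => by
  simpa using congrArg Complex.re h

theorem integrable_fourierInv_posMulExpNeg : Integrable (𝓕⁻ posMulExpNeg) := by
  have hπ : (2 * π) ≠ 0 := by positivity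
  have hcont : Continuous (𝓕⁻ posMulExpNeg) := by
    rw [funext fourierInv_posMulExpNeg]
    exact Continuous.inv₀ (by fun_prop) fun x => pow_ne_zero 2 (one_sub_two_pi_mul_I_ne_zero x)
  refine (integrable_inv_one_add_sq.comp_mul_left' hπ).mono' hcont.aestronglyMeasurable
    (.of_forall fun x => ?_)
  rw [fourierInv_posMulExpNeg, norm_inv_one_sub_two_pi_mul_I_sq]

theorem memLp_fourierInv_posMulExpNeg : MemLp (𝓕⁻ posMulExpNeg) 2 :=
  integrable_fourierInv_posMulExpNeg.memLp_two_of_norm_le (C := 1) (.of_forall fun x => by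
    rw [fourierInv_posMulExpNeg, norm_inv_one_sub_two_pi_mul_I_sq]
    exact inv_le_one_of_one_le₀ (le_add_of_nonneg_right (sq_nonneg _)))

theorem fourierInv_posMulExpNeg_ne_zero (x : ℝ) : 𝓕⁻ posMulExpNeg x ≠ 0 := by
  rw [fourierInv_posMulExpNeg]
  exact inv_ne_zero (pow_ne_zero 2 (one_sub_two_pi_mul_I_ne_zero x))

theorem fourier_fourierInv_posMulExpNeg : 𝓕 (𝓕⁻ posMulExpNeg) = posMulExpNeg := by
  refine continuous_posMulExpNeg.fourier_fourierInv_eq integrable_posMulExpNeg ?_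
  have h : 𝓕 posMulExpNeg = fun w => 𝓕⁻ posMulExpNeg (-w) := by
    ext w; rw [Real.fourierInv_eq_fourier_neg, neg_neg]
  exact h ▸ integrable_fourierInv_posMulExpNeg.comp_neg

namespace IsFourierL2

variable {U : L2R ≃ₗᵢ[ℂ] L2R}

theorem apply_ae_eq_fourier (hU : IsFourierL2 U) {F : L2R} {φ : ℝ → ℂ} (hF : F =ᵐ[volume] φ)
    (hφ : Integrable φ) : U F =ᵐ[volume] 𝓕 φ := by
  have hφ2 : MemLp φ 2 volume := (Lp.memLp F).ae_eq hF
  rw [show F = hφ2.toLp φ from Lp.ext (hF.trans hφ2.coeFn_toLp.symm)]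
  exact hU φ hφ hφ2

theorem apply_modulation (hU : IsFourierL2 U) (a : ℝ) (F : L2R) :
    U (modulation a F) = translation a (U F) := by
  -- both sides are continuous in `F`; on smooth compactly supported `F`, `U` is `𝓕`
  refine congrFun (Continuous.ext_on
    (Lp.dense_hasCompactSupport_contDiff (p := 2) ENNReal.ofNat_ne_top)
    (U.continuous.comp (isometry_modulation a).continuous)
    ((translation a).continuous.comp U.continuous) ?_) F
  rintro G ⟨φ, hG, hφ_supp, hφ_smooth⟩
  have hφ : Integrable φ := hφ_smooth.continuous.integrable_of_hasCompactSupport hφ_supp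
  have hmod : U (modulation a G) =ᵐ[volume] 𝓕 fun x => 𝐞 (a * x) • φ x := by
    refine hU.apply_ae_eq_fourier ?_
      (memLp_one_iff_integrable.1 ((memLp_one_iff_integrable.2 hφ).fourierChar_smul a))
    filter_upwards [coeFn_modulation a G, hG] with x hx hGx
    rw [hx, hGx]
  have htrans : translation a (U G) =ᵐ[volume] fun w => 𝓕 φ (w - a) :=
    (coeFn_translation a (U G)).trans <|
      (measurePreserving_sub_right volume a).quasiMeasurePreserving.ae_eq_comp
        (hU.apply_ae_eq_fourier hG hφ)
  show U (modulation a G) = translation a (U G)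
  refine Lp.ext ?_
  filter_upwards [hmod, htrans] with w hmod htrans
  rw [hmod, htrans, Real.fourier_fourierChar_smul]

theorem symm_translation (hU : IsFourierL2 U) (a : ℝ) (g : L2R) :
    U.symm (translation a g) = modulation a (U.symm g) := by
  rw [U.symm_apply_eq, hU.apply_modulation, U.apply_symm_apply]

theorem exists_vanishing_nonpos_symm_ne_zero (hU : IsFourierL2 U) :
    ∃ G : L2R, (∀ᵐ x : ℝ, x ≤ 0 → G x = 0) ∧ ∀ᵐ x : ℝ, U.symm G x ≠ 0 := by
  refine ⟨U (memLp_fourierInv_posMulExpNeg.toLp _), ?_, ?_⟩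
  · have h := hU _ integrable_fourierInv_posMulExpNeg memLp_fourierInv_posMulExpNeg
    rw [fourier_fourierInv_posMulExpNeg] at h
    filter_upwards [h] with x hx hx0
    rw [hx, posMulExpNeg_of_nonpos hx0]
  · rw [U.symm_apply_apply]
    filter_upwards [memLp_fourierInv_posMulExpNeg.coeFn_toLp] with x hx
    rw [hx]
    exact fourierInv_posMulExpNeg_ne_zero x

end IsFourierL2

def WHSymmetric (U : L2R ≃ₗᵢ[ℂ] L2R) (κ : ℝ → ℂ) : Prop :=
  ∀ g g' : L2R, g ∈ WHDom U κ → g' ∈ WHDom U κ →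
    ∫ x : ℝ, conj ((U.symm g') x) * (κ x * (U.symm g) x) =
      ∫ x : ℝ, conj (κ x * (U.symm g') x) * (U.symm g) x

section WienerHopf

variable {U : L2R ≃ₗᵢ[ℂ] L2R} {κ : ℝ → ℂ}

theorem translation_mem_WHDom (hU : IsFourierL2 U) {a : ℝ} (ha : 0 ≤ a) {g : L2R}
    (hg : g ∈ WHDom U κ) : translation a g ∈ WHDom U κ := by
  constructor
  · filter_upwards [coeFn_translation a g,
      (measurePreserving_sub_right volume a).quasiMeasurePreserving.ae hg.1] with x hx hgx hx0
    rw [hx]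
    exact hgx (by linarith)
  · rw [hU.symm_translation]
    refine (hg.2.fourierChar_smul a).ae_eq ?_
    filter_upwards [coeFn_modulation a (U.symm g)] with x hx
    rw [hx, Circle.smul_def, Circle.smul_def, smul_eq_mul, smul_eq_mul, mul_left_comm]

theorem ae_restrict_Ioi_eq_zero_of_forall_inner_symm_eq_zero
    (hdense : ∀ g : L2R, (∀ᵐ x : ℝ, x ≤ 0 → g x = 0) → g ∈ closure (WHDom U κ)) {Ψ : L2R}
    (h : ∀ g' ∈ WHDom U κ, ⟪U.symm g', Ψ⟫_ℂ = 0) : U Ψ =ᵐ[volume.restrict (Ioi 0)] 0 := by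
  refine Lp.ae_restrict_eq_zero_of_forall_inner_eq_zero (𝕜 := ℂ) measurableSet_Ioi fun g hg => ?_
  rw [compl_Ioi] at hg
  have hclosed : IsClosed {g : L2R | ⟪g, U Ψ⟫_ℂ = 0} :=
    isClosed_eq (continuous_id.inner continuous_const) continuous_const
  refine closure_minimal (fun g' hg' => ?_) hclosed
    (hdense g ((ae_restrict_iff' measurableSet_Iic).1 hg))
  show ⟪g', U Ψ⟫_ℂ = 0
  rw [← h g' hg', U.symm.inner_map_eq_flip, LinearIsometryEquiv.symm_symm]

theorem WHSymmetric.of_ae_im_eq_zero (h : ∀ᵐ x : ℝ, (κ x).im = 0) : WHSymmetric U κ := by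
  intro g g' _ _
  refine integral_congr_ae ?_
  filter_upwards [h] with x hx
  rw [map_mul, Complex.conj_eq_iff_im.2 hx]
  ring

theorem WHSymmetric.inner_symm_eq_zero (hsym : WHSymmetric U κ) {g g' : L2R}
    (hg : g ∈ WHDom U κ) (hg' : g' ∈ WHDom U κ) {Ψ : L2R}
    (hΨ : Ψ =ᵐ[volume] fun x => (κ x - conj (κ x)) * U.symm g x) : ⟪U.symm g', Ψ⟫_ℂ = 0 := by
  have h₁ : Integrable fun x => conj (U.symm g' x) * (κ x * U.symm g x) :=
    (Lp.memLp (U.symm g')).star.integrable_mul hg.2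
  have h₂ : Integrable fun x => conj (κ x * U.symm g' x) * U.symm g x :=
    hg'.2.star.integrable_mul (Lp.memLp _)
  rw [L2.inner_def, ← sub_eq_zero.2 (hsym g g' hg hg'), ← integral_sub h₁ h₂]
  refine integral_congr_ae ?_
  filter_upwards [hΨ] with x hx
  rw [RCLike.inner_apply, hx, map_mul]
  ring

theorem WHSymmetric.ae_symm_eq_zero (hsym : WHSymmetric U κ) (hU : IsFourierL2 U)
    (hκ : Measurable κ)
    (hdense : ∀ g : L2R, (∀ᵐ x : ℝ, x ≤ 0 → g x = 0) → g ∈ closure (WHDom U κ)) {g : L2R}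
    (hg : g ∈ WHDom U κ) : ∀ᵐ x : ℝ, (κ x).im ≠ 0 → U.symm g x = 0 := by
  have hψ : MemLp (fun x => (κ x - conj (κ x)) * U.symm g x) 2 volume := by
    refine hg.2.of_le_mul (c := 2) ((hκ.sub (Complex.continuous_conj.measurable.comp hκ)
      ).aestronglyMeasurable.mul (Lp.aestronglyMeasurable _)) (.of_forall fun x => ?_)
    rw [norm_mul, norm_mul, ← mul_assoc]
    gcongr
    exact (norm_sub_le _ _).trans_eq (by rw [RCLike.norm_conj]; ring)
  set Ψ : L2R := hψ.toLp _
  -- `modulation a Ψ` is the function `Ψ` built from the translate `translation a g` of `g`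
  have hvanish : ∀ a : ℝ, 0 ≤ a → translation a (U Ψ) =ᵐ[volume.restrict (Ioi 0)] 0 := by
    intro a ha
    rw [← hU.apply_modulation]
    refine ae_restrict_Ioi_eq_zero_of_forall_inner_symm_eq_zero hdense fun g' hg' =>
      hsym.inner_symm_eq_zero (translation_mem_WHDom hU ha hg) hg' ?_
    rw [hU.symm_translation]
    filter_upwards [coeFn_modulation a Ψ, hψ.coeFn_toLp, coeFn_modulation a (U.symm g)]
      with x hΨx hψx hgx
    rw [hΨx, hgx, hψx, Circle.smul_def, Circle.smul_def, smul_eq_mul, smul_eq_mul]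
    ring
  have hΨ : Ψ = 0 := U.map_eq_zero_iff.1 (eq_zero_of_forall_translation_eq_zero_on_Ioi hvanish)
  filter_upwards [hψ.coeFn_toLp, Lp.eq_zero_iff_ae_eq_zero.1 hΨ] with x hψx hΨx hx
  have h : (κ x - conj (κ x)) * U.symm g x = 0 := by rw [← hψx, hΨx, Pi.zero_apply]
  exact (mul_eq_zero.1 h).resolve_left (sub_ne_zero.2 fun h => hx (conj_eq_iff_im.1 h.symm))

end WienerHopf

/-- Symmetry `⟨g', W_κ g⟩ = ⟨W_κ g', g⟩` on the domain, transported by `U⁻¹` to integrals. -/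
theorem wienerHopf_symmetric_iff_real
    (U : L2R ≃ₗᵢ[ℂ] L2R) (hU : IsFourierL2 U)
    (κ : ℝ → ℂ) (hκ : Measurable κ)
    (hdense : ∀ g : L2R, (∀ᵐ x : ℝ, x ≤ 0 → g x = 0) → g ∈ closure (WHDom U κ)) :
    ((∀ g g' : L2R, g ∈ WHDom U κ → g' ∈ WHDom U κ →
        ∫ x : ℝ, conj ((U.symm g') x) * (κ x * (U.symm g) x) =
          ∫ x : ℝ, conj (κ x * (U.symm g') x) * (U.symm g) x) ↔
      ∀ᵐ x : ℝ ∂volume, (κ x).im = 0) := by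
  refine ⟨fun hsym => ?_, WHSymmetric.of_ae_im_eq_zero⟩
  have hS : MeasurableSet {x | (κ x).im ≠ 0} :=
    (measurableSet_eq_fun (Complex.measurable_im.comp hκ) measurable_const).compl
  have hclosure : closure (WHDom U κ) ⊆
      U.symm ⁻¹' {F | F =ᵐ[volume.restrict {x | (κ x).im ≠ 0}] 0} :=
    closure_minimal
      (fun g hg => (ae_restrict_iff' hS).2 (WHSymmetric.ae_symm_eq_zero hsym hU hκ hdense hg))
      ((Lp.isClosed_setOf_ae_restrict_eq_zero 2 _).preimage U.symm.continuous)
  obtain ⟨G, hG, hG_ne⟩ := hU.exists_vanishing_nonpos_symm_ne_zero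
  filter_upwards [(ae_restrict_iff' hS).1 (hclosure (hdense G hG)), hG_ne] with x hx hne
  exact not_not.1 fun him => hne (hx him)
end
end

section
/- Let κ : ℝ → ℂ be measurable and nonnegative a.e., set E = κ⁻¹(ℝ∖{0}) and define A = P₊ F M(√κ) P_E* : L²(E) → L²(ℝ₊) with maximal domain. Then A is densely defined, A* = P_E M(√κ) F⁻¹ P₊*, and the Wiener–Hopf operator satisfies W_κ = A A*. -/
/-!
After conjugation by the unitary `U`, every part of the statement is about multiplication by `√κ`.
Since `U` is unitary, `⟪U (√κ f), h⟫ = ⟪f, √κ U⁻¹h⟫`; this is the adjoint identity. On the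
truncation sets `{‖√κ‖ ≤ n}` the multiplier is bounded. Truncating a function that vanishes off
`E` therefore gives elements of `dom A` converging to it, which is density. Testing the
boundedness of `f ↦ ⟨A f, h⟩` on the truncations `φₙ` of `q = √κ U⁻¹h` itself gives
`‖φₙ‖² ≤ C ‖φₙ‖`, so `q ∈ L²` by Fatou. Finally `κ = √κ · √κ` a.e., and `√κ ≤ 1 + κ` shows that
`dom W_κ` lies in `dom A*`.
-/

open MeasureTheory Complex Real Set FourierTransform
open scoped ENNReal ComplexConjugate

noncomputable section

/-- √κ, viewed as a complex-valued function. -/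
def sqrtSymb (κ : ℝ → ℝ) : ℝ → ℂ := fun x => (Real.sqrt (κ x) : ℂ)

/-- The domain of A = P₊ F M(√κ) P_E* where E = κ⁻¹(ℝ∖{0}):  L²(E) is modelled as the
subspace of L²(ℝ) of functions vanishing a.e. off E. -/
def DomA (κ : ℝ → ℝ) : Set L2R :=
  {f : L2R | (∀ᵐ x : ℝ, κ x = 0 → f x = 0) ∧
    MeasureTheory.MemLp (fun x : ℝ => sqrtSymb κ x * f x) 2 volume}

open Filter Topology

theorem eventually_norm_le_natCast {α β : Type*} [Norm β] (m : α → β) (x : α) :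
    ∀ᶠ n : ℕ in atTop, x ∈ {y | ‖m y‖ ≤ n} :=
  tendsto_natCast_atTop_atTop.eventually_ge_atTop ‖m x‖

section Multiplier

variable {α E : Type*} [MeasurableSpace α] {μ : Measure α} [NormedAddCommGroup E]
  {p : ℝ≥0∞} {S : ℕ → Set α}

theorem tendsto_eLpNorm_indicator_sub_self (hp : p ≠ ∞) {f : α → E} (hf : MemLp f p μ)
    (hS : ∀ n, MeasurableSet (S n)) (hcover : ∀ x, ∀ᶠ n in atTop, x ∈ S n) :
    Tendsto (fun n => eLpNorm ((S n).indicator f - f) p μ) atTop (𝓝 0) := by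
  rcases eq_or_ne p 0 with rfl | hp0
  · simp
  have hp_pos : 0 < p.toReal := ENNReal.toReal_pos hp0 hp
  suffices Tendsto (fun n => ∫⁻ x, ‖(S n).indicator f x - f x‖ₑ ^ p.toReal ∂μ) atTop (𝓝 0) by
    have := ((ENNReal.continuous_rpow_const (y := 1 / p.toReal)).tendsto 0).comp this
    rw [ENNReal.zero_rpow_of_pos (by positivity)] at this
    simpa [eLpNorm_eq_lintegral_rpow_enorm_toReal hp0 hp, Function.comp_def] using this
  have hlim : ∀ x, Tendsto (fun n => ‖(S n).indicator f x - f x‖ₑ ^ p.toReal) atTop (𝓝 0) :=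
    fun x => tendsto_const_nhds.congr' <| (hcover x).mono fun n hn => by
      simp [Set.indicator_of_mem hn, ENNReal.zero_rpow_of_pos hp_pos]
  have hbound : ∀ n, (fun x => ‖(S n).indicator f x - f x‖ₑ ^ p.toReal) ≤ᵐ[μ]
      fun x => ‖f x‖ₑ ^ p.toReal := fun n => .of_forall fun x => by
    by_cases hx : x ∈ S n <;> simp [Set.indicator_of_mem, Set.indicator_of_notMem, hx, hp_pos]
  simpa using tendsto_lintegral_of_dominated_convergence' _
    (fun n => ((hf.1.indicator (hS n)).sub hf.1).enorm.pow_const _) hbound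
    (lintegral_rpow_enorm_lt_top_of_eLpNorm_lt_top hp0 hp hf.2).ne (.of_forall hlim)

theorem MeasureTheory.Lp.tendsto_toLp_indicator [Fact (1 ≤ p)] (hp : p ≠ ∞) (f : Lp E p μ)
    (hS : ∀ n, MeasurableSet (S n)) (hcover : ∀ x, ∀ᶠ n in atTop, x ∈ S n) :
    Tendsto (fun n => ((Lp.memLp f).indicator (hS n)).toLp _) atTop (𝓝 f) := by
  rw [Lp.tendsto_Lp_iff_tendsto_eLpNorm']
  refine (tendsto_eLpNorm_indicator_sub_self hp (Lp.memLp f) hS hcover).congr fun n => ?_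
  exact eLpNorm_congr_ae ((((Lp.memLp f).indicator (hS n)).coeFn_toLp).sub .rfl).symm

theorem memLp_of_eLpNorm_indicator_le {f : α → E} (hf : AEStronglyMeasurable f μ)
    (hS : ∀ n, MeasurableSet (S n)) (hcover : ∀ x, ∀ᶠ n in atTop, x ∈ S n) {C : ℝ≥0∞}
    (hC : C ≠ ∞) (hbound : ∀ n, eLpNorm ((S n).indicator f) p μ ≤ C) : MemLp f p μ :=
  ⟨hf, (Lp.eLpNorm_le_of_ae_tendsto (.of_forall hbound) (fun n => hf.indicator (hS n))
    (.of_forall fun x => tendsto_const_nhds.congr' <| (hcover x).mono fun _ hn =>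
      (Set.indicator_of_mem hn f).symm)).trans_lt hC.lt_top⟩

theorem MeasureTheory.MemLp.indicator_norm_le_mul {m f : α → ℂ} (hm : Measurable m)
    (hf : MemLp f p μ) (n : ℕ) : MemLp ({x | ‖m x‖ ≤ n}.indicator fun x => m x * f x) p μ := by
  refine hf.of_le_mul (c := n) ?_ (.of_forall fun x => ?_)
  · exact (hm.aestronglyMeasurable.mul hf.1).indicator (measurableSet_le hm.norm measurable_const)
  by_cases hx : ‖m x‖ ≤ n
  · simpa [hx, Set.indicator_of_mem] using mul_le_mul_of_nonneg_right hx (norm_nonneg (f x))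
  · rw [Set.indicator_of_notMem (s := {x | ‖m x‖ ≤ n}) hx, norm_zero]
    positivity

theorem MeasureTheory.MemLp.sqrt_mul {w : α → ℝ} (hw : Measurable w)
    (hw0 : ∀ᵐ x ∂μ, 0 ≤ w x) {f : α → ℂ} (hf : MemLp f p μ)
    (hwf : MemLp (fun x => (w x : ℂ) * f x) p μ) :
    MemLp (fun x => (√(w x) : ℂ) * f x) p μ := by
  refine (hf.norm.add hwf.norm).mono'
    ((Complex.measurable_ofReal.comp hw.sqrt).aestronglyMeasurable.mul hf.1) ?_
  filter_upwards [hw0] with x hx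
  have hsqrt : √(w x) ≤ 1 + w x := by nlinarith [Real.sq_sqrt hx, sq_nonneg (√(w x) - 1)]
  simp only [norm_mul, Complex.norm_real, Real.norm_of_nonneg (Real.sqrt_nonneg _),
    Real.norm_of_nonneg hx, Pi.add_apply]
  nlinarith [norm_nonneg (f x)]

end Multiplier

section L2

variable {α : Type*} [MeasurableSpace α] {μ : Measure α}

theorem integral_conj_mul_eq_inner (f g : Lp ℂ 2 μ) :
    ∫ x, conj (f x) * g x ∂μ = inner ℂ f g := by
  rw [MeasureTheory.L2.inner_def]
  simp [RCLike.inner_apply, mul_comm]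

theorem integral_conj_map_toLp_mul (U : Lp ℂ 2 μ ≃ₗᵢ[ℂ] Lp ℂ 2 μ) {m f : α → ℂ}
    (hmf : MemLp (fun x => m x * f x) 2 μ) (h : Lp ℂ 2 μ) :
    ∫ x, conj (U (hmf.toLp _) x) * h x ∂μ = ∫ x, conj (f x) * (conj (m x) * U.symm h x) ∂μ :=
  calc ∫ x, conj (U (hmf.toLp _) x) * h x ∂μ
      = inner ℂ (hmf.toLp _) (U.symm h) := by
        rw [integral_conj_mul_eq_inner, U.inner_map_eq_flip]
    _ = ∫ x, conj (f x) * (conj (m x) * U.symm h x) ∂μ := by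
        rw [← integral_conj_mul_eq_inner]
        refine integral_congr_ae ?_
        filter_upwards [hmf.coeFn_toLp] with x hx
        simp only [hx, map_mul]
        ring

theorem integral_conj_toLp_indicator_mul {q : α → ℂ} {s : Set α}
    (hφ : MemLp (s.indicator q) 2 μ) :
    ∫ x, conj (hφ.toLp _ x) * q x ∂μ = ((‖hφ.toLp _‖ ^ 2 : ℝ) : ℂ) :=
  calc ∫ x, conj (hφ.toLp _ x) * q x ∂μ = ∫ x, conj (hφ.toLp _ x) * hφ.toLp _ x ∂μ := by
        refine integral_congr_ae ?_
        filter_upwards [hφ.coeFn_toLp] with x hx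
        by_cases hxs : x ∈ s <;> simp [hx, hxs]
    _ = _ := by
        rw [integral_conj_mul_eq_inner, inner_self_eq_norm_sq_to_K]
        norm_cast

end L2

section Symbol

variable {κ : ℝ → ℝ}

theorem measurable_sqrtSymb (hκ : Measurable κ) : Measurable (sqrtSymb κ) := by
  unfold sqrtSymb; fun_prop

theorem conj_sqrtSymb (x : ℝ) : conj (sqrtSymb κ x) = sqrtSymb κ x :=
  Complex.conj_ofReal _

theorem sqrtSymb_mul_self {x : ℝ} (hx : 0 ≤ κ x) : sqrtSymb κ x * sqrtSymb κ x = κ x := by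
  rw [sqrtSymb, ← Complex.ofReal_mul, Real.mul_self_sqrt hx]

theorem measurableSet_norm_sqrtSymb_le (hκ : Measurable κ) (n : ℕ) :
    MeasurableSet {x | ‖sqrtSymb κ x‖ ≤ n} :=
  measurableSet_le (measurable_sqrtSymb hκ).norm measurable_const

theorem toLp_indicator_mem_domA (hκ : Measurable κ) {g : ℝ → ℂ} {n : ℕ}
    (hg : MemLp ({x | ‖sqrtSymb κ x‖ ≤ n}.indicator g) 2 volume)
    (hg0 : ∀ᵐ x, κ x = 0 → g x = 0) : hg.toLp _ ∈ DomA κ := by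
  constructor
  · filter_upwards [hg.coeFn_toLp, hg0] with x hx hx0 hκx
    simp [hx, Set.indicator_apply, hx0 hκx]
  · refine (hg.indicator_norm_le_mul (measurable_sqrtSymb hκ) n).ae_eq ?_
    filter_upwards [hg.coeFn_toLp] with x hx
    by_cases hxS : ‖sqrtSymb κ x‖ ≤ n <;> simp [hx, hxS, Set.indicator_apply]

theorem mem_closure_domA (hκ : Measurable κ) {f : L2R} (hf : ∀ᵐ x, κ x = 0 → f x = 0) :
    f ∈ closure (DomA κ) :=
  mem_closure_of_tendsto
    (Lp.tendsto_toLp_indicator ENNReal.ofNat_ne_top f (measurableSet_norm_sqrtSymb_le hκ)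
      (eventually_norm_le_natCast _))
    (.of_forall fun _ => toLp_indicator_mem_domA hκ _ hf)

theorem integral_conj_map_sqrtSymb_mul (U : L2R ≃ₗᵢ[ℂ] L2R) {f : L2R} (hf : f ∈ DomA κ)
    (h : L2R) :
    ∫ x, conj (U (hf.2.toLp _) x) * h x = ∫ x, conj (f x) * (sqrtSymb κ x * (U.symm h) x) := by
  simpa only [conj_sqrtSymb] using integral_conj_map_toLp_mul U hf.2 h

theorem memLp_sqrtSymb_mul_of_bounded (hκ : Measurable κ) (U : L2R ≃ₗᵢ[ℂ] L2R) (h : L2R)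
    {C : ℝ} (hC0 : 0 ≤ C) (hC : ∀ (f : L2R) (hf : f ∈ DomA κ),
      ‖∫ x, conj (U (hf.2.toLp _) x) * h x‖ ≤ C * ‖f‖) :
    MemLp (fun x => sqrtSymb κ x * (U.symm h) x) 2 volume := by
  have hφ (n : ℕ) : MemLp ({x | ‖sqrtSymb κ x‖ ≤ n}.indicator
      fun x => sqrtSymb κ x * (U.symm h) x) 2 volume :=
    (Lp.memLp (U.symm h)).indicator_norm_le_mul (measurable_sqrtSymb hκ) n
  have hdom (n : ℕ) : (hφ n).toLp _ ∈ DomA κ :=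
    toLp_indicator_mem_domA hκ (hφ n) (.of_forall fun x hx => by simp [sqrtSymb, hx])
  have hbound (n : ℕ) : ‖(hφ n).toLp _‖ ≤ C := by
    have := hC _ (hdom n)
    rw [integral_conj_map_sqrtSymb_mul U (hdom n), integral_conj_toLp_indicator_mul,
      Complex.norm_real, Real.norm_of_nonneg (by positivity)] at this
    nlinarith [norm_nonneg ((hφ n).toLp _)]
  refine memLp_of_eLpNorm_indicator_le
    ((measurable_sqrtSymb hκ).aestronglyMeasurable.mul (Lp.aestronglyMeasurable _))
    (measurableSet_norm_sqrtSymb_le hκ) (eventually_norm_le_natCast _)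
    (ENNReal.ofReal_ne_top (r := C)) fun n => ?_
  rw [← Lp.enorm_toLp (hφ n), ← ofReal_norm]
  exact ENNReal.ofReal_le_ofReal (hbound n)

theorem exists_bound_of_memLp_sqrtSymb_mul (U : L2R ≃ₗᵢ[ℂ] L2R) (h : L2R)
    (hq : MemLp (fun x => sqrtSymb κ x * (U.symm h) x) 2 volume) :
    ∃ C : ℝ, 0 ≤ C ∧ ∀ (f : L2R) (hf : f ∈ DomA κ),
      ‖∫ x, conj (U (hf.2.toLp _) x) * h x‖ ≤ C * ‖f‖ := by
  refine ⟨‖hq.toLp _‖, norm_nonneg _, fun f hf => ?_⟩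
  calc ‖∫ x, conj (U (hf.2.toLp _) x) * h x‖ = ‖inner ℂ f (hq.toLp _)‖ := by
        rw [integral_conj_map_sqrtSymb_mul U hf, ← integral_conj_mul_eq_inner]
        congr 1
        refine integral_congr_ae ?_
        filter_upwards [hq.coeFn_toLp] with x hx
        rw [hx]
    _ ≤ ‖f‖ * ‖hq.toLp _‖ := norm_inner_le_norm _ _
    _ = ‖hq.toLp _‖ * ‖f‖ := mul_comm _ _

theorem mul_ae_eq_sqrtSymb_mul_sqrtSymb_mul (hκ0 : ∀ᵐ x, 0 ≤ κ x) (ψ : ℝ → ℂ) :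
    (fun x => (κ x : ℂ) * ψ x) =ᵐ[volume] fun x => sqrtSymb κ x * (sqrtSymb κ x * ψ x) := by
  filter_upwards [hκ0] with x hx
  rw [← mul_assoc, sqrtSymb_mul_self hx]

theorem memLp_mul_iff_memLp_sqrtSymb_mul (hκ : Measurable κ) (hκ0 : ∀ᵐ x, 0 ≤ κ x)
    {ψ : ℝ → ℂ} (hψ : MemLp ψ 2 volume) :
    MemLp (fun x => (κ x : ℂ) * ψ x) 2 volume ↔
      MemLp (fun x => sqrtSymb κ x * ψ x) 2 volume ∧
        MemLp (fun x => sqrtSymb κ x * (sqrtSymb κ x * ψ x)) 2 volume :=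
  ⟨fun hκψ => ⟨hψ.sqrt_mul hκ hκ0 hκψ, hκψ.ae_eq (mul_ae_eq_sqrtSymb_mul_sqrtSymb_mul hκ0 ψ)⟩,
    fun h => h.2.ae_eq (mul_ae_eq_sqrtSymb_mul_sqrtSymb_mul hκ0 ψ).symm⟩

end Symbol

theorem wienerHopf_eq_AAstar_general
    (U : L2R ≃ₗᵢ[ℂ] L2R)
    (κ : ℝ → ℝ) (hκm : Measurable κ) (hκ0 : ∀ᵐ x : ℝ ∂volume, 0 ≤ κ x) :
    -- (a) A is densely defined in L²(E)
    (∀ f₀ : L2R, (∀ᵐ x : ℝ, κ x = 0 → f₀ x = 0) → f₀ ∈ closure (DomA κ)) ∧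
    -- (b) A* = P_E M(√κ) F⁻¹ P₊*
    (∀ h : L2R, (∀ᵐ x : ℝ, x ≤ 0 → h x = 0) →
      ((MeasureTheory.MemLp (fun x : ℝ => sqrtSymb κ x * (U.symm h) x) 2 volume →
          ∀ (f : L2R) (hf : f ∈ DomA κ),
            ∫ x : ℝ, conj ((U (hf.2.toLp _)) x) * h x =
              ∫ x : ℝ, conj (f x) * (sqrtSymb κ x * (U.symm h) x)) ∧
       ((∃ C : ℝ, 0 ≤ C ∧ ∀ (f : L2R) (hf : f ∈ DomA κ),
            ‖∫ x : ℝ, conj ((U (hf.2.toLp _)) x) * h x‖ ≤ C * ‖f‖) ↔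
          MeasureTheory.MemLp (fun x : ℝ => sqrtSymb κ x * (U.symm h) x) 2 volume))) ∧
    -- (c) W_κ = A A*
    (∀ h : L2R, (∀ᵐ x : ℝ, x ≤ 0 → h x = 0) →
      (MeasureTheory.MemLp (fun x : ℝ => (κ x : ℂ) * (U.symm h) x) 2 volume ↔
        (MeasureTheory.MemLp (fun x : ℝ => sqrtSymb κ x * (U.symm h) x) 2 volume ∧
         MeasureTheory.MemLp
           (fun x : ℝ => sqrtSymb κ x * (sqrtSymb κ x * (U.symm h) x)) 2 volume)) ∧
      ∀ (h1 : MeasureTheory.MemLp (fun x : ℝ => (κ x : ℂ) * (U.symm h) x) 2 volume)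
        (h2 : MeasureTheory.MemLp
          (fun x : ℝ => sqrtSymb κ x * (sqrtSymb κ x * (U.symm h) x)) 2 volume),
        ∀ᵐ x : ℝ, 0 < x → (U (h1.toLp _)) x = (U (h2.toLp _)) x) := by
  refine ⟨fun _ => mem_closure_domA hκm, fun h _ => ⟨?_, ?_⟩, fun h _ => ⟨?_, ?_⟩⟩
  · exact fun _ _ hf => integral_conj_map_sqrtSymb_mul U hf h
  · exact ⟨fun ⟨_, hC0, hC⟩ => memLp_sqrtSymb_mul_of_bounded hκm U h hC0 hC,
      exists_bound_of_memLp_sqrtSymb_mul U h⟩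
  · exact memLp_mul_iff_memLp_sqrtSymb_mul hκm hκ0 (Lp.memLp _)
  · intro h1 h2
    rw [MemLp.toLp_congr h1 h2 (mul_ae_eq_sqrtSymb_mul_sqrtSymb_mul hκ0 _)]
    exact .of_forall fun _ _ => rfl

/-- For κ ≥ 0 and A = P₊ F M(√κ) P_E*:  (a) A is densely defined;
(b) A* = P_E M(√κ) F⁻¹ P₊*, i.e. for every h ∈ L²(ℝ₊) (modelled as an element of L²(ℝ)
vanishing a.e. on (-∞,0]) the adjoint identity ⟨A f, h⟩ = ⟨f, √κ · F⁻¹P₊*h⟩ holds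
whenever √κ·F⁻¹P₊*h ∈ L², and h belongs to dom A* (the functional f ↦ ⟨A f, h⟩ is
bounded on dom A) exactly when √κ·F⁻¹P₊*h ∈ L²;
(c) W_κ = A A*: both domains and values coincide. -/
theorem wienerHopf_eq_AAstar
    (U : L2R ≃ₗᵢ[ℂ] L2R) (hU : IsFourierL2 U)
    (κ : ℝ → ℝ) (hκm : Measurable κ) (hκ0 : ∀ᵐ x : ℝ ∂volume, 0 ≤ κ x) :
    -- (a) A is densely defined in L²(E)
    (∀ f₀ : L2R, (∀ᵐ x : ℝ, κ x = 0 → f₀ x = 0) → f₀ ∈ closure (DomA κ)) ∧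
    -- (b) A* = P_E M(√κ) F⁻¹ P₊*
    (∀ h : L2R, (∀ᵐ x : ℝ, x ≤ 0 → h x = 0) →
      ((MeasureTheory.MemLp (fun x : ℝ => sqrtSymb κ x * (U.symm h) x) 2 volume →
          ∀ (f : L2R) (hf : f ∈ DomA κ),
            ∫ x : ℝ, conj ((U (hf.2.toLp _)) x) * h x =
              ∫ x : ℝ, conj (f x) * (sqrtSymb κ x * (U.symm h) x)) ∧
       ((∃ C : ℝ, 0 ≤ C ∧ ∀ (f : L2R) (hf : f ∈ DomA κ),
            ‖∫ x : ℝ, conj ((U (hf.2.toLp _)) x) * h x‖ ≤ C * ‖f‖) ↔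
          MeasureTheory.MemLp (fun x : ℝ => sqrtSymb κ x * (U.symm h) x) 2 volume))) ∧
    -- (c) W_κ = A A*
    (∀ h : L2R, (∀ᵐ x : ℝ, x ≤ 0 → h x = 0) →
      (MeasureTheory.MemLp (fun x : ℝ => (κ x : ℂ) * (U.symm h) x) 2 volume ↔
        (MeasureTheory.MemLp (fun x : ℝ => sqrtSymb κ x * (U.symm h) x) 2 volume ∧
         MeasureTheory.MemLp
           (fun x : ℝ => sqrtSymb κ x * (sqrtSymb κ x * (U.symm h) x)) 2 volume)) ∧
      ∀ (h1 : MeasureTheory.MemLp (fun x : ℝ => (κ x : ℂ) * (U.symm h) x) 2 volume)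
        (h2 : MeasureTheory.MemLp
          (fun x : ℝ => sqrtSymb κ x * (sqrtSymb κ x * (U.symm h) x)) 2 volume),
        ∀ᵐ x : ℝ, 0 < x → (U (h1.toLp _)) x = (U (h2.toLp _)) x) :=
  wienerHopf_eq_AAstar_general U κ hκm hκ0
end
end

section
/- Define Q₀ = 1, Q₁(ξ) = 2ξ − 1/3, and Q_{n+1}(ξ) = 2ξQ_n(ξ) − Q_{n−1}(ξ) for n ≥ 1 (equivalently Q_n = U_n − (1/3)U_{n−1} where U_n are Chebyshev polynomials of the second kind). Then (Q_n)_{n≥0} is an orthonormal sequence in L²(−1,1) with respect to the weight function ξ ↦ (9/π)·√(1−ξ²)/(5−3ξ), i.e. ∫_{−1}^{1} Q_m(ξ)Q_n(ξ)·(9/π)·√(1−ξ²)/(5−3ξ) dξ = δ_{mn}. -/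
/-!
Substituting ξ = cos θ turns the weight into sin²θ / (5 - 3 cos θ), and
Q_n(cos θ) sin θ = sin((n+1)θ) - sin(nθ)/3. By the product-to-sum formulas, the product of two
such sines is (5 - 3 cos θ) cos((m-n)θ)/9, whose quotient by 5 - 3 cos θ integrates over [0, π]
to (π/9) δ_{mn}, plus a combination of h_{m+n+1} and h_{m+n}, where
h_k(θ) = (cos((k+1)θ) - cos(kθ)/3) / (5 - 3 cos θ).

The integrals D_k of h_k over [0, π] vanish: as cos((k+2)θ) + cos(kθ) = 2 cos θ cos((k+1)θ) and
cos((k+1)θ) integrates to zero, D_{k+1} = 3 D_k; but |h_k| ≤ 2/3, so this geometric sequence is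
bounded, hence zero.
-/

open MeasureTheory Real Polynomial

noncomputable section

/-- Q_n = U_n - (1/3)·U_{n-1}, where U_n is the Chebyshev polynomial of the second kind
(with the convention U_{-1} = 0). -/
def lalescuQ (n : ℕ) : Polynomial ℝ :=
  Polynomial.Chebyshev.U ℝ (n : ℤ) - Polynomial.C (1 / 3) * Polynomial.Chebyshev.U ℝ ((n : ℤ) - 1)

open intervalIntegral Polynomial.Chebyshev

theorem integral_Ioo_mul_sqrt_one_sub_sq (g : ℝ → ℝ) :
    ∫ ξ in Set.Ioo (-1 : ℝ) 1, g ξ * √(1 - ξ ^ 2) = ∫ θ in 0..π, g (cos θ) * sin θ ^ 2 := by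
  have hcos := integral_measureT_eq_integral_cos (f := fun ξ ↦ g ξ * (1 - ξ ^ 2))
  rw [integral_measureT, integral_of_le (by norm_num), integral_Ioc_eq_integral_Ioo] at hcos
  simp only [← sin_sq] at hcos
  rw [← hcos]
  congr 1 with ξ
  rw [sqrt_inv, mul_assoc, ← div_eq_mul_inv, div_sqrt]

theorem eval_lalescuQ_cos_mul_sin (n : ℕ) (θ : ℝ) :
    (lalescuQ n).eval (cos θ) * sin θ = sin ((n + 1) * θ) - sin (n * θ) / 3 := by
  have hU := U_real_cos θ (n : ℤ)
  have hU' := U_real_cos θ ((n : ℤ) - 1)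
  push_cast at hU hU'
  rw [sub_add_cancel] at hU'
  simp only [lalescuQ, eval_sub, eval_mul, eval_C]
  linear_combination hU - hU' / 3

theorem two_le_five_sub_three_mul_cos (θ : ℝ) : 2 ≤ 5 - 3 * cos θ := by
  linarith [cos_le_one θ]

theorem sin_add_sub_third_mul_sin_add_sub_third (a b t : ℝ) :
    (sin (a + t) - sin a / 3) * (sin (b + t) - sin b / 3) =
      (5 - 3 * cos t) * cos (a - b) / 9 -
        ((cos (a + b + 2 * t) - cos (a + b + t) / 3) -
          (cos (a + b + t) - cos (a + b) / 3) / 3) / 2 := by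
  simp only [sin_add, cos_add, cos_sub, cos_two_mul, sin_two_mul]
  linear_combination cos a * cos b * sin_sq_add_cos_sq t

theorem eq_zero_of_forall_pow_mul_abs_le {r x C : ℝ} (hr : 1 < r) (h : ∀ k : ℕ, r ^ k * |x| ≤ C) :
    x = 0 := by
  by_contra hx
  obtain ⟨k, hk⟩ := pow_unbounded_of_one_lt (C / |x|) hr
  have := h k
  rw [div_lt_iff₀ (abs_pos.2 hx)] at hk
  linarith

theorem integral_cos_int_mul_of_ne_zero {j : ℤ} (hj : j ≠ 0) :
    ∫ θ in 0..π, cos (j * θ) = 0 := by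
  rw [integral_comp_mul_left (fun θ ↦ cos θ) (Int.cast_ne_zero.2 hj), integral_cos,
    sin_int_mul_pi, mul_zero, sin_zero, sub_zero, smul_zero]

theorem integral_cos_sub_mul (m n : ℕ) :
    ∫ θ in 0..π, cos ((m - n : ℝ) * θ) = if m = n then π else 0 := by
  split_ifs with h
  · simp [h]
  · have hne : (m : ℤ) - n ≠ 0 := by omega
    simpa using integral_cos_int_mul_of_ne_zero hne

def cosSubThirdDiv (k : ℕ) (θ : ℝ) : ℝ :=
  (cos ((k + 1) * θ) - cos (k * θ) / 3) / (5 - 3 * cos θ)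

theorem continuous_cosSubThirdDiv (k : ℕ) : Continuous (cosSubThirdDiv k) :=
  Continuous.div (by fun_prop) (by fun_prop) fun θ ↦ by
    linarith [two_le_five_sub_three_mul_cos θ]

theorem cosSubThirdDiv_succ_sub (k : ℕ) (θ : ℝ) :
    cosSubThirdDiv (k + 1) θ - 3 * cosSubThirdDiv k θ = -(2 / 3) * cos ((k + 1) * θ) := by
  have hden : 5 - 3 * cos θ ≠ 0 := by linarith [two_le_five_sub_three_mul_cos θ]
  have hsum : cos ((k + 1 + 1) * θ) + cos (k * θ) = 2 * cos θ * cos ((k + 1) * θ) := by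
    rw [show (k + 1 + 1) * θ = (k + 1) * θ + θ by ring, show k * θ = (k + 1) * θ - θ by ring,
      cos_add, cos_sub]
    ring
  unfold cosSubThirdDiv
  push_cast
  field_simp
  linear_combination 3 * hsum

theorem abs_cosSubThirdDiv_le (k : ℕ) (θ : ℝ) : |cosSubThirdDiv k θ| ≤ 2 / 3 := by
  have hden := two_le_five_sub_three_mul_cos θ
  rw [cosSubThirdDiv, abs_div, abs_of_pos (a := 5 - 3 * cos θ) (by linarith),
    div_le_iff₀ (by linarith)]
  calc |cos ((k + 1) * θ) - cos (k * θ) / 3| ≤ |cos ((k + 1) * θ)| + |cos (k * θ) / 3| :=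
        abs_sub _ _
    _ ≤ 1 + 1 / 3 := by
        rw [abs_div, abs_of_pos (three_pos : (0 : ℝ) < 3)]
        gcongr <;> exact abs_cos_le_one _
    _ ≤ 2 / 3 * (5 - 3 * cos θ) := by linarith

theorem integral_cosSubThirdDiv_eq_zero (k : ℕ) : ∫ θ in 0..π, cosSubThirdDiv k θ = 0 := by
  set D : ℕ → ℝ := fun j ↦ ∫ θ in 0..π, cosSubThirdDiv j θ
  have hint : ∀ j, IntervalIntegrable (cosSubThirdDiv j) volume 0 π :=
    fun j ↦ (continuous_cosSubThirdDiv j).intervalIntegrable 0 π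
  have hsucc : ∀ j, D (j + 1) = 3 * D j := by
    intro j
    rw [← sub_eq_zero, ← intervalIntegral.integral_const_mul,
      ← integral_sub (hint _) ((hint j).const_mul 3)]
    simp_rw [cosSubThirdDiv_succ_sub]
    rw [intervalIntegral.integral_const_mul, ← Nat.cast_succ, ← Int.cast_natCast,
      integral_cos_int_mul_of_ne_zero (by omega), mul_zero]
  have hgeom : ∀ j, D j = 3 ^ j * D 0 := by
    intro j
    induction j with
    | zero => simp
    | succ j ih => rw [hsucc, ih, pow_succ]; ring
  have hbound : ∀ j, 3 ^ j * |D 0| ≤ 2 / 3 * π := by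
    intro j
    have h : ‖D j‖ ≤ 2 / 3 * |π - 0| :=
      norm_integral_le_of_norm_le_const fun θ _ ↦ abs_cosSubThirdDiv_le j θ
    rwa [norm_eq_abs, hgeom, abs_mul, abs_pow, abs_of_pos three_pos, sub_zero,
      abs_of_nonneg pi_nonneg] at h
  show D k = 0
  rw [hgeom, eq_zero_of_forall_pow_mul_abs_le (by norm_num) hbound, mul_zero]

theorem sin_sub_third_mul_sin_sub_third_div (m n : ℕ) (θ : ℝ) :
    (sin ((m + 1) * θ) - sin (m * θ) / 3) * (sin ((n + 1) * θ) - sin (n * θ) / 3) /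
        (5 - 3 * cos θ) =
      cos ((m - n : ℝ) * θ) / 9 -
        (cosSubThirdDiv (m + n + 1) θ - cosSubThirdDiv (m + n) θ / 3) / 2 := by
  have hden : 5 - 3 * cos θ ≠ 0 := by linarith [two_le_five_sub_three_mul_cos θ]
  have key := sin_add_sub_third_mul_sin_add_sub_third (m * θ) (n * θ) θ
  unfold cosSubThirdDiv
  push_cast
  rw [show ((m : ℝ) + 1) * θ = m * θ + θ by ring, show ((n : ℝ) + 1) * θ = n * θ + θ by ring,
    show ((m : ℝ) - n) * θ = m * θ - n * θ by ring,
    show ((m : ℝ) + n + 1 + 1) * θ = m * θ + n * θ + 2 * θ by ring,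
    show ((m : ℝ) + n + 1) * θ = m * θ + n * θ + θ by ring,
    show ((m : ℝ) + n) * θ = m * θ + n * θ by ring, key]
  field_simp

theorem integral_sin_sub_third_mul_sin_sub_third_div (m n : ℕ) :
    ∫ θ in 0..π, (sin ((m + 1) * θ) - sin (m * θ) / 3) * (sin ((n + 1) * θ) - sin (n * θ) / 3) /
        (5 - 3 * cos θ) =
      if m = n then π / 9 else 0 := by
  have hint : ∀ k, IntervalIntegrable (cosSubThirdDiv k) volume 0 π :=
    fun k ↦ (continuous_cosSubThirdDiv k).intervalIntegrable 0 π
  have hcos : IntervalIntegrable (fun θ ↦ cos ((m - n : ℝ) * θ)) volume 0 π :=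
    (continuous_cos.comp (continuous_const_mul _)).intervalIntegrable 0 π
  simp_rw [sin_sub_third_mul_sin_sub_third_div]
  rw [intervalIntegral.integral_sub (hcos.div_const _)
      (((hint _).sub ((hint _).div_const _)).div_const _),
    intervalIntegral.integral_div, intervalIntegral.integral_div,
    intervalIntegral.integral_sub (hint _) ((hint _).div_const _), intervalIntegral.integral_div,
    integral_cos_sub_mul, integral_cosSubThirdDiv_eq_zero, integral_cosSubThirdDiv_eq_zero]
  split_ifs <;> ring

/-- (Q_n) is orthonormal in L²(-1,1) with respect to the weight
ξ ↦ (9/π)·√(1-ξ²)/(5-3ξ). -/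
theorem lalescuQ_orthonormal :
    ∀ m n : ℕ,
      ∫ ξ in Set.Ioo (-1 : ℝ) 1,
        (lalescuQ m).eval ξ * (lalescuQ n).eval ξ *
          (9 / π * Real.sqrt (1 - ξ ^ 2) / (5 - 3 * ξ)) =
      if m = n then 1 else 0 := by
  intro m n
  calc _ = ∫ ξ in Set.Ioo (-1 : ℝ) 1,
          9 / π * ((lalescuQ m).eval ξ * (lalescuQ n).eval ξ / (5 - 3 * ξ)) * √(1 - ξ ^ 2) := by
        congr 1 with ξ
        ring
    _ = 9 / π * ∫ θ in 0..π, (sin ((m + 1) * θ) - sin (m * θ) / 3) *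
          (sin ((n + 1) * θ) - sin (n * θ) / 3) / (5 - 3 * cos θ) := by
        rw [integral_Ioo_mul_sqrt_one_sub_sq, ← intervalIntegral.integral_const_mul]
        congr 1 with θ
        rw [← eval_lalescuQ_cos_mul_sin, ← eval_lalescuQ_cos_mul_sin]
        ring
    _ = if m = n then 1 else 0 := by
        rw [integral_sin_sub_third_mul_sin_sub_third_div]
        split_ifs
        · field_simp
        · rw [mul_zero]
end
end
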